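/- arXiv:2311.03346 — 9 statements merged into one kernel-verified Lean document; each statement's English description precedes it below -/
import Mathlib

section
/- Let E be a finite ground set, 𝒫 = 2^E, let π : 2^E → (−∞,1] be supermodular, and let ρ ∈ [0,1]^E fulfil condition (⋆). Define Q := ⋃_{P ∈ 𝒫^=_{π,ρ}} P. If Q ∩ E_ρ = ∅, then S' := E_ρ ∖ Q is an admissible support candidate for π and ρ; otherwise, for every choice of e_Q ∈ Q ∩ E_ρ, the set S' := (E_ρ ∖ Q) ∪ {e_Q} is an admissible support candidate for π and ρ. -/
open Finset

variable {α : Type*} [Fintype α] [DecidableEq α]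

/-- The dominance relation `P ⊑_{π,ρ} Q`. -/
def Dominates (π : Finset α → ℝ) (ρ : α → ℝ) (P Q : Finset α) : Prop :=
  P = Q ∨ (π P < π Q ∧ π P ≤ π Q - ∑ e ∈ Q \ P, ρ e)

/-- `P` is non-dominated (w.r.t. `π` and `ρ`) in `PP'`. -/
def NonDominated (π : Finset α → ℝ) (ρ : α → ℝ) (PP' : Finset (Finset α)) (P : Finset α) : Prop :=
  P ∈ PP' ∧ ∀ Q ∈ PP', Q ≠ P → ¬ Dominates π ρ P Q

/-- `S` is an admissible support candidate (ASC) for `π` and `ρ` (w.r.t. the collection `PP`):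
(S1) `S ⊆ E_ρ`; (S2) `|S ∩ P| ≤ 1` for all tight `P`; and (S3) `|S ∩ P| ≥ 1` for every `P`
non-dominated in `{Q ∈ PP : π Q > 0}`. -/
def IsASC (PP : Finset (Finset α)) (π : Finset α → ℝ) (ρ : α → ℝ) (S : Finset α) : Prop :=
  (∀ e ∈ S, 0 < ρ e) ∧
  (∀ P ∈ PP, ∑ e ∈ P, ρ e = π P → (S ∩ P).card ≤ 1) ∧
  (∀ P, NonDominated π ρ (PP.filter fun Q => 0 < π Q) P → 1 ≤ (S ∩ P).card)

lemma tight_union_aux (π : Finset α → ℝ) (ρ : α → ℝ)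
    (hsuper : ∀ P Q : Finset α, π P + π Q ≤ π (P ∩ Q) + π (P ∪ Q))
    (hstar : ∀ P : Finset α, π P ≤ ∑ e ∈ P, ρ e)
    (A B : Finset α) (hA : ∑ e ∈ A, ρ e = π A) (hB : ∑ e ∈ B, ρ e = π B) :
    ∑ e ∈ A ∪ B, ρ e = π (A ∪ B) := by
  have h1 := hstar (A ∩ B)
  have h2 := hstar (A ∪ B)
  have h3 := hsuper A B
  have h4 : ∑ e ∈ A ∪ B, ρ e + ∑ e ∈ A ∩ B, ρ e = ∑ e ∈ A, ρ e + ∑ e ∈ B, ρ e :=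
    Finset.sum_union_inter
  linarith

lemma tight_biUnion_aux (π : Finset α → ℝ) (ρ : α → ℝ)
    (hsuper : ∀ P Q : Finset α, π P + π Q ≤ π (P ∩ Q) + π (P ∪ Q))
    (hstar : ∀ P : Finset α, π P ≤ ∑ e ∈ P, ρ e)
    (s : Finset (Finset α)) (hs : s.Nonempty)
    (h : ∀ P ∈ s, ∑ e ∈ P, ρ e = π P) :
    ∑ e ∈ s.biUnion id, ρ e = π (s.biUnion id) := by
  induction hs using Finset.Nonempty.cons_induction with
  | singleton A => simpa using h A (by simp)
  | cons A s hA hs ih =>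
    rw [Finset.cons_eq_insert, Finset.biUnion_insert]
    exact tight_union_aux π ρ hsuper hstar _ _ (h A (by simp))
      (ih fun P hP => h P (by simp [hP]))

lemma key_aux (π : Finset α → ℝ) (ρ : α → ℝ)
    (hsuper : ∀ P Q : Finset α, π P + π Q ≤ π (P ∩ Q) + π (P ∪ Q))
    (hstar : ∀ P : Finset α, π P ≤ ∑ e ∈ P, ρ e)
    (P B : Finset α) (hB : ∑ e ∈ B, ρ e = π B) :
    π P + ∑ e ∈ (P ∪ B) \ P, ρ e ≤ π (P ∪ B) := by
  have h1 := hstar (P ∩ B)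
  have h3 := hsuper P B
  have hsub : P ∩ B ⊆ B := Finset.inter_subset_right
  have h4 : ∑ e ∈ B \ (P ∩ B), ρ e + ∑ e ∈ P ∩ B, ρ e = ∑ e ∈ B, ρ e :=
    Finset.sum_sdiff hsub
  have h5 : (P ∪ B) \ P = B \ (P ∩ B) := by
    ext x; simp [Finset.mem_sdiff, Finset.mem_union, Finset.mem_inter]; tauto
  rw [h5]
  linarith
/-- With `PP = 2^E` and `π` supermodular, the set `S'` constructed from `E_ρ` and
`Q = ⋃_{P tight} P` is an ASC. -/
theorem supermodular_asc (π : Finset α → ℝ) (ρ : α → ℝ)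
    (hπ1 : ∀ P : Finset α, π P ≤ 1)
    (hsuper : ∀ P Q : Finset α, π P + π Q ≤ π (P ∩ Q) + π (P ∪ Q))
    (hρ : ∀ e, 0 ≤ ρ e ∧ ρ e ≤ 1)
    (hstar : ∀ P : Finset α, π P ≤ ∑ e ∈ P, ρ e) :
    ((((Finset.univ : Finset (Finset α)).filter fun P => ∑ e ∈ P, ρ e = π P).biUnion id) ∩
        (Finset.univ.filter fun e => 0 < ρ e) = ∅ →
      IsASC Finset.univ π ρ
        ((Finset.univ.filter fun e => 0 < ρ e) \
          (((Finset.univ : Finset (Finset α)).filter fun P => ∑ e ∈ P, ρ e = π P).biUnion id))) ∧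
    (∀ eQ ∈ (((Finset.univ : Finset (Finset α)).filter fun P => ∑ e ∈ P, ρ e = π P).biUnion id) ∩
        (Finset.univ.filter fun e => 0 < ρ e),
      IsASC Finset.univ π ρ
        (((Finset.univ.filter fun e => 0 < ρ e) \
            (((Finset.univ : Finset (Finset α)).filter fun P => ∑ e ∈ P, ρ e = π P).biUnion id)) ∪
          {eQ})) := by
  set T : Finset (Finset α) :=
    (Finset.univ : Finset (Finset α)).filter (fun P => ∑ e ∈ P, ρ e = π P) with hT
  set Q : Finset α := T.biUnion id with hQdef
  set Eρ : Finset α := Finset.univ.filter (fun e => 0 < ρ e) with hEρ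
  have hmemEρ : ∀ e, e ∈ Eρ ↔ 0 < ρ e := by intro e; simp [hEρ]
  -- tight sets are contained in Q
  have hsubQ : ∀ P : Finset α, (∑ e ∈ P, ρ e = π P) → P ⊆ Q := by
    intro P hP x hx
    exact Finset.mem_biUnion.2 ⟨P, by simp [hT, hP], hx⟩
  constructor
  · -- first branch
    intro hdisj
    refine ⟨?_, ?_, ?_⟩
    · intro e he
      exact (hmemEρ e).1 (Finset.mem_sdiff.1 he).1
    · intro P _ hP
      have : (Eρ \ Q) ∩ P = ∅ := by
        rw [Finset.eq_empty_iff_forall_notMem]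
        intro x hx
        rcases Finset.mem_inter.1 hx with ⟨hx1, hx2⟩
        exact (Finset.mem_sdiff.1 hx1).2 (hsubQ P hP hx2)
      simp [this]
    · intro P hP
      by_contra hc
      have hempty : (Eρ \ Q) ∩ P = ∅ := by
        rcases Finset.eq_empty_or_nonempty ((Eρ \ Q) ∩ P) with h | h
        · exact h
        · exact absurd (Finset.card_pos.2 h) (by omega)
      obtain ⟨hPmem, -⟩ := hP
      have hπP : 0 < π P := (Finset.mem_filter.1 hPmem).2
      have hzero : ∀ e ∈ P, ρ e = 0 := by
        intro e he
        by_contra hne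
        have hpos : 0 < ρ e := lt_of_le_of_ne (hρ e).1 (Ne.symm hne)
        have heE : e ∈ Eρ := (hmemEρ e).2 hpos
        by_cases heQ : e ∈ Q
        · have : e ∈ Q ∩ Eρ := Finset.mem_inter.2 ⟨heQ, heE⟩
          rw [hdisj] at this; exact absurd this (Finset.notMem_empty e)
        · have : e ∈ (Eρ \ Q) ∩ P :=
            Finset.mem_inter.2 ⟨Finset.mem_sdiff.2 ⟨heE, heQ⟩, he⟩
          rw [hempty] at this; exact absurd this (Finset.notMem_empty e)
      have : π P ≤ 0 := (hstar P).trans_eq (Finset.sum_eq_zero hzero)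
      linarith
  · -- second branch
    intro eQ heQ
    rcases Finset.mem_inter.1 heQ with ⟨heQQ, heQE⟩
    have heQpos : 0 < ρ eQ := (hmemEρ eQ).1 heQE
    refine ⟨?_, ?_, ?_⟩
    · intro e he
      rcases Finset.mem_union.1 he with h | h
      · exact (hmemEρ e).1 (Finset.mem_sdiff.1 h).1
      · rw [Finset.mem_singleton.1 h]; exact heQpos
    · intro P _ hP
      have hsub : ((Eρ \ Q) ∪ {eQ}) ∩ P ⊆ {eQ} := by
        intro x hx
        rcases Finset.mem_inter.1 hx with ⟨hx1, hx2⟩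
        rcases Finset.mem_union.1 hx1 with h | h
        · exact absurd (hsubQ P hP hx2) (Finset.mem_sdiff.1 h).2
        · exact h
      exact (Finset.card_le_card hsub).trans (by simp)
    · intro P hP
      by_contra hc
      have hempty : ((Eρ \ Q) ∪ {eQ}) ∩ P = ∅ := by
        rcases Finset.eq_empty_or_nonempty (((Eρ \ Q) ∪ {eQ}) ∩ P) with h | h
        · exact h
        · exact absurd (Finset.card_pos.2 h) (by omega)
      have hnotP : ∀ x, x ∈ (Eρ \ Q) ∪ {eQ} → x ∉ P := by
        intro x hx hxP
        have : x ∈ ((Eρ \ Q) ∪ {eQ}) ∩ P := Finset.mem_inter.2 ⟨hx, hxP⟩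
        rw [hempty] at this; exact absurd this (Finset.notMem_empty x)
      obtain ⟨hPmem, hnd⟩ := hP
      have hπP : 0 < π P := (Finset.mem_filter.1 hPmem).2
      -- Q is tight
      have hTne : T.Nonempty := by
        rcases Finset.mem_biUnion.1 heQQ with ⟨A, hA, -⟩
        exact ⟨A, hA⟩
      have htightQ : ∑ e ∈ Q, ρ e = π Q :=
        tight_biUnion_aux π ρ hsuper hstar T hTne
          (fun P hP => (Finset.mem_filter.1 hP).2)
      have hkey := key_aux π ρ hsuper hstar P Q htightQ
      have heQP : eQ ∉ P := hnotP eQ (Finset.mem_union_right _ (Finset.mem_singleton_self eQ))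
      have heQdiff : eQ ∈ (P ∪ Q) \ P :=
        Finset.mem_sdiff.2 ⟨Finset.mem_union_right _ heQQ, heQP⟩
      have hpos : 0 < ∑ e ∈ (P ∪ Q) \ P, ρ e :=
        lt_of_lt_of_le heQpos
          (Finset.single_le_sum (fun e _ => (hρ e).1) heQdiff)
      have hne : P ∪ Q ≠ P := by
        intro h
        rw [h] at heQdiff
        simp at heQdiff
      have hπR : 0 < π (P ∪ Q) := by linarith
      exact hnd (P ∪ Q) (Finset.mem_filter.2 ⟨Finset.mem_univ _, hπR⟩) hne
        (Or.inr ⟨by linarith, by linarith⟩)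
end

section
/- Let E be a finite ground set, 𝒫 = 2^E, and let π : 2^E → (−∞,1] be supermodular, i.e., π_{P∩Q} + π_{P∪Q} ≥ π_P + π_Q for all P,Q ⊆ E. Then (E,𝒫,π) is (⋆)-sufficient: every ρ ∈ [0,1]^E fulfilling condition (⋆) possesses a feasible decomposition for (E,𝒫,π). -/
open Finset

variable {α : Type*} [Fintype α] [DecidableEq α]

/-- `z` is a feasible decomposition of `ρ` for `(E, PP, π)`: `z` is a probability distribution on
`2^E` with `∑_{S : S ∩ P ≠ ∅} z S ≥ π P` for all `P ∈ PP` and marginals `∑_{S : e ∈ S} z S = ρ e`. -/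
def IsFeasibleDecomposition (PP : Finset (Finset α)) (π : Finset α → ℝ) (ρ : α → ℝ)
    (z : Finset α → ℝ) : Prop :=
  (∀ S, 0 ≤ z S ∧ z S ≤ 1) ∧
  (∑ S : Finset α, z S = 1) ∧
  (∀ P ∈ PP, π P ≤ ∑ S ∈ Finset.univ.filter (fun S => (S ∩ P).Nonempty), z S) ∧
  (∀ e : α, ∑ S ∈ Finset.univ.filter (fun S => e ∈ S), z S = ρ e)

-- minimal tight set lemma
private lemma exists_min_tight (π : Finset α → ℝ) (t : ℝ)
    (hπt : ∀ P : Finset α, π P ≤ t)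
    (hsuper : ∀ P Q : Finset α, π P + π Q ≤ π (P ∩ Q) + π (P ∪ Q)) :
    ∀ (F : Finset (Finset α)), F.Nonempty → (∀ P ∈ F, π P = t) →
      ∃ C : Finset α, π C = t ∧ ∀ P ∈ F, C ⊆ P := by
  intro F
  induction F using Finset.induction_on with
  | empty => intro h; exact absurd h (by simp)
  | @insert a F' ha ih =>
    intro _ htight
    rcases F'.eq_empty_or_nonempty with hF' | hF'
    · subst hF'
      exact ⟨a, htight a (mem_insert_self _ _), by simp⟩
    · obtain ⟨C, hCt, hCsub⟩ := ih hF' (fun P hP => htight P (mem_insert_of_mem hP))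
      have ha' : π a = t := htight a (mem_insert_self _ _)
      have h1 := hsuper a C
      have h2 := hπt (a ∪ C)
      have h3 := hπt (a ∩ C)
      refine ⟨a ∩ C, by linarith, ?_⟩
      intro P hP
      rcases mem_insert.mp hP with rfl | hP
      · exact inter_subset_left
      · exact inter_subset_right.trans (hCsub P hP)

private lemma hit_ineq (S P Q : Finset α) (δ : ℝ) (hδ : 0 ≤ δ) :
    (if (S ∩ (P ∩ Q)).Nonempty then δ else 0) + (if (S ∩ (P ∪ Q)).Nonempty then δ else 0)
      ≤ (if (S ∩ P).Nonempty then δ else 0) + (if (S ∩ Q).Nonempty then δ else 0) := by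
  have k1 : (S ∩ (P ∩ Q)).Nonempty → (S ∩ P).Nonempty := fun h =>
    h.mono (inter_subset_inter (Finset.Subset.refl S) inter_subset_left)
  have k2 : (S ∩ (P ∩ Q)).Nonempty → (S ∩ Q).Nonempty := fun h =>
    h.mono (inter_subset_inter (Finset.Subset.refl S) inter_subset_right)
  have k3 : (S ∩ (P ∪ Q)).Nonempty → (S ∩ P).Nonempty ∨ (S ∩ Q).Nonempty := by
    rintro ⟨x, hx⟩
    rcases mem_inter.mp hx with ⟨hxS, hxPQ⟩
    rcases mem_union.mp hxPQ with h | h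
    · exact Or.inl ⟨x, mem_inter.mpr ⟨hxS, h⟩⟩
    · exact Or.inr ⟨x, mem_inter.mpr ⟨hxS, h⟩⟩
  split_ifs with h1 h2 h3 h4 <;> try linarith
  all_goals first
    | exact absurd (k1 h1) ‹_›
    | exact absurd (k2 h1) ‹_›
    | (rcases k3 ‹_› with h | h <;> [exact absurd h ‹_›; exact absurd h ‹_›])

open scoped Classical in
private noncomputable def smeas (π : Finset α → ℝ) (ρ : α → ℝ) (t : ℝ) : ℕ :=
  (univ.filter (fun e : α => 0 < ρ e)).card
  + (univ.filter (fun e : α => ρ e ≠ t)).card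
  + (univ.filter (fun P : Finset α => π P ≠ t)).card
  + (univ.filter (fun P : Finset α => π P ≠ ∑ e ∈ P, ρ e)).card
  + (if 0 < t then 1 else 0)

private lemma base_zero (π : Finset α → ℝ) (ρ : α → ℝ) (t : ℝ) (ht : t = 0)
    (hρ0 : ∀ e, 0 ≤ ρ e) (hρt : ∀ e, ρ e ≤ t) (hπt : ∀ P : Finset α, π P ≤ t) :
    ∃ z : Finset α → ℝ, (∀ S, 0 ≤ z S) ∧ (∑ S : Finset α, z S = t) ∧
      (∀ P : Finset α, π P ≤ ∑ S ∈ univ.filter (fun S => (S ∩ P).Nonempty), z S) ∧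
      (∀ e, ∑ S ∈ univ.filter (fun S => e ∈ S), z S = ρ e) := by
  subst ht
  refine ⟨fun _ => 0, fun _ => le_refl 0, by simp, ?_, ?_⟩
  · intro P; simpa using hπt P
  · intro e
    have h1 := hρ0 e
    have h2 := hρt e
    simp only [Finset.sum_const_zero]
    linarith

private lemma main_rec (n : ℕ) :
    ∀ (π : Finset α → ℝ) (ρ : α → ℝ) (t : ℝ),
      0 ≤ t →
      (∀ e, 0 ≤ ρ e) → (∀ e, ρ e ≤ t) →
      (∀ P : Finset α, π P ≤ t) →
      (∀ P : Finset α, π P ≤ ∑ e ∈ P, ρ e) →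
      (∀ P Q : Finset α, π P + π Q ≤ π (P ∩ Q) + π (P ∪ Q)) →
      smeas π ρ t ≤ n →
      ∃ z : Finset α → ℝ, (∀ S, 0 ≤ z S) ∧ (∑ S : Finset α, z S = t) ∧
        (∀ P : Finset α, π P ≤ ∑ S ∈ univ.filter (fun S => (S ∩ P).Nonempty), z S) ∧
        (∀ e, ∑ S ∈ univ.filter (fun S => e ∈ S), z S = ρ e) := by
  classical
  induction n with
  | zero =>
    intro π ρ t h0t hρ0 hρt hπt hstar hsuper hm
    have ht : t = 0 := by
      by_contra h
      have hpos : 0 < t := lt_of_le_of_ne h0t (Ne.symm h)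
      have : 1 ≤ smeas π ρ t := by
        unfold smeas
        simp [hpos]
      omega
    exact base_zero π ρ t ht hρ0 hρt hπt
  | succ n ih =>
    intro π ρ t h0t hρ0 hρt hπt hstar hsuper hm
    rcases eq_or_lt_of_le h0t with ht | ht
    · exact base_zero π ρ t ht.symm hρ0 hρt hπt
    -- t > 0 : perform one greedy step
    have hexS : ∃ S : Finset α,
        (∀ e ∈ S, 0 < ρ e) ∧
        (∀ e, ρ e = t → e ∈ S) ∧
        (∀ P : Finset α, π P = t → (S ∩ P).Nonempty) ∧
        (∀ u ∈ S, ∀ v ∈ S, u ≠ v → t < ρ u + ρ v) := by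
      by_cases hT : (univ.filter (fun P : Finset α => π P = t)).Nonempty
      · obtain ⟨C, hCt, hCsub⟩ := exists_min_tight π t hπt hsuper _ hT
          (fun P hP => (mem_filter.mp hP).2)
        have hCpos : ∃ c ∈ C, 0 < ρ c := by
          by_contra h
          push_neg at h
          have h1 : ∑ e ∈ C, ρ e ≤ 0 := Finset.sum_nonpos h
          have h2 := hstar C
          rw [hCt] at h2
          linarith
        obtain ⟨c, hcC, hcpos⟩ := hCpos
        refine ⟨insert c (univ.filter fun e => ρ e = t), ?_, ?_, ?_, ?_⟩
        · intro e he
          rcases mem_insert.mp he with rfl | he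
          · exact hcpos
          · rw [(mem_filter.mp he).2]; exact ht
        · intro e het
          exact mem_insert_of_mem (mem_filter.mpr ⟨mem_univ _, het⟩)
        · intro P hPt
          have hsub : C ⊆ P := hCsub P (mem_filter.mpr ⟨mem_univ _, hPt⟩)
          exact ⟨c, mem_inter.mpr ⟨mem_insert_self _ _, hsub hcC⟩⟩
        · intro u hu v hv huv
          rcases mem_insert.mp hu with rfl | hu'
          · have hv' : ρ v = t := by
              rcases mem_insert.mp hv with rfl | hv'
              · exact absurd rfl huv
              · exact (mem_filter.mp hv').2
            linarith
          · have hu'' : ρ u = t := (mem_filter.mp hu').2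
            have hvpos : 0 < ρ v := by
              rcases mem_insert.mp hv with rfl | hv'
              · exact hcpos
              · rw [(mem_filter.mp hv').2]; exact ht
            linarith
      · refine ⟨univ.filter fun e => ρ e = t, ?_, ?_, ?_, ?_⟩
        · intro e he; rw [(mem_filter.mp he).2]; exact ht
        · intro e het; exact mem_filter.mpr ⟨mem_univ _, het⟩
        · intro P hPt
          exact absurd ⟨P, mem_filter.mpr ⟨mem_univ _, hPt⟩⟩ hT
        · intro u hu v hv huv
          have h1 : ρ u = t := (mem_filter.mp hu).2
          have h2 : ρ v = t := (mem_filter.mp hv).2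
          linarith
    obtain ⟨S, hSpos, hVS, hShit, hSpair⟩ := hexS
    -- star-tight sets meet S in at most one element
    have hScard : ∀ P : Finset α, π P = ∑ e ∈ P, ρ e → (S ∩ P).card ≤ 1 := by
      intro P hP
      by_contra hc
      push_neg at hc
      obtain ⟨u, hu, v, hv, huv⟩ := Finset.one_lt_card.mp hc
      have hu' := mem_inter.mp hu
      have hv' := mem_inter.mp hv
      have hsub : ({u, v} : Finset α) ⊆ P := by
        intro x hx
        rcases mem_insert.mp hx with rfl | hx
        · exact hu'.2
        · rw [mem_singleton.mp hx]; exact hv'.2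
      have h2 : ρ u + ρ v ≤ ∑ e ∈ P, ρ e := by
        rw [← Finset.sum_pair huv]
        exact Finset.sum_le_sum_of_subset_of_nonneg hsub (fun i _ _ => hρ0 i)
      have h3 := hSpair u hu'.1 v hv'.1 huv
      have h4 := hπt P
      linarith [hP ▸ h4]
    -- the step length δ
    set D : Finset ℝ := insert t (
        (S.image ρ) ∪
        ((univ.filter (fun P : Finset α => S ∩ P = ∅)).image (fun P => t - π P)) ∪
        ((univ.filter (fun e : α => e ∉ S)).image (fun e => t - ρ e)) ∪
        ((univ.filter (fun P : Finset α => 2 ≤ (S ∩ P).card)).image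
          (fun P => (∑ e ∈ P, ρ e - π P) / ((S ∩ P).card - 1)))) with hDdef
    have hDne : D.Nonempty := insert_nonempty _ _
    set δ : ℝ := D.min' hDne with hδdef
    have hmemD : ∀ x ∈ D, 0 < x := by
      intro x hx
      rw [hDdef] at hx
      rcases mem_insert.mp hx with rfl | hx
      · exact ht
      rcases mem_union.mp hx with hx | hx
      rotate_left
      · -- slack ratio
        obtain ⟨P, hP, rfl⟩ := mem_image.mp hx
        have hk : 2 ≤ (S ∩ P).card := (mem_filter.mp hP).2
        have hnum : π P < ∑ e ∈ P, ρ e := by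
          rcases lt_or_eq_of_le (hstar P) with h | h
          · exact h
          · exact absurd (hScard P h) (by omega)
        have hden : (0:ℝ) < ((S ∩ P).card : ℝ) - 1 := by
          have : (2:ℝ) ≤ ((S ∩ P).card : ℝ) := by exact_mod_cast hk
          linarith
        exact div_pos (by linarith) hden
      rcases mem_union.mp hx with hx | hx
      rotate_left
      · obtain ⟨e, he, rfl⟩ := mem_image.mp hx
        have heS : e ∉ S := (mem_filter.mp he).2
        have h1 := hρt e
        have h2 : ρ e ≠ t := fun h => heS (hVS e h)
        have : ρ e < t := lt_of_le_of_ne h1 h2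
        linarith
      rcases mem_union.mp hx with hx | hx
      · obtain ⟨e, he, rfl⟩ := mem_image.mp hx
        exact hSpos e he
      · obtain ⟨P, hP, rfl⟩ := mem_image.mp hx
        have hPm : S ∩ P = ∅ := (mem_filter.mp hP).2
        have h1 := hπt P
        have h2 : π P ≠ t := by
          intro h
          obtain ⟨x, hxm⟩ := hShit P h
          rw [hPm] at hxm
          exact absurd hxm (Finset.notMem_empty x)
        have : π P < t := lt_of_le_of_ne h1 h2
        linarith
    have hδpos : 0 < δ := hmemD δ (Finset.min'_mem D hDne)
    have hδt : δ ≤ t := Finset.min'_le D t (by rw [hDdef]; exact mem_insert_self _ _)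
    have hδρ : ∀ e ∈ S, δ ≤ ρ e := fun e he => Finset.min'_le D _ (by
      rw [hDdef]
      exact mem_insert_of_mem (mem_union_left _ (mem_union_left _ (mem_union_left _
        (mem_image_of_mem ρ he)))))
    have hδmiss : ∀ P : Finset α, S ∩ P = ∅ → δ ≤ t - π P := fun P hP =>
      Finset.min'_le D _ (by
        rw [hDdef]
        exact mem_insert_of_mem (mem_union_left _ (mem_union_left _ (mem_union_right _
          (mem_image_of_mem _ (mem_filter.mpr ⟨mem_univ _, hP⟩))))))
    have hδnotS : ∀ e, e ∉ S → δ ≤ t - ρ e := fun e he =>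
      Finset.min'_le D _ (by
        rw [hDdef]
        exact mem_insert_of_mem (mem_union_left _ (mem_union_right _
          (mem_image_of_mem _ (mem_filter.mpr ⟨mem_univ _, he⟩))))
        )
    have hδslack : ∀ P : Finset α, 2 ≤ (S ∩ P).card →
        δ * (((S ∩ P).card : ℝ) - 1) ≤ ∑ e ∈ P, ρ e - π P := by
      intro P hk
      have hden : (0:ℝ) < ((S ∩ P).card : ℝ) - 1 := by
        have : (2:ℝ) ≤ ((S ∩ P).card : ℝ) := by exact_mod_cast hk
        linarith
      have hle : δ ≤ (∑ e ∈ P, ρ e - π P) / (((S ∩ P).card : ℝ) - 1) :=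
        Finset.min'_le D _ (by
          rw [hDdef]
          exact mem_insert_of_mem (mem_union_right _
            (mem_image_of_mem _ (mem_filter.mpr ⟨mem_univ _, hk⟩))))
      calc δ * (((S ∩ P).card : ℝ) - 1)
          ≤ ((∑ e ∈ P, ρ e - π P) / (((S ∩ P).card : ℝ) - 1)) * (((S ∩ P).card : ℝ) - 1) := by
            exact mul_le_mul_of_nonneg_right hle (le_of_lt hden)
        _ = ∑ e ∈ P, ρ e - π P := div_mul_cancel₀ _ (ne_of_gt hden)
    -- updated data
    set ρ' : α → ℝ := fun e => if e ∈ S then ρ e - δ else ρ e with hρ'def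
    set π' : Finset α → ℝ := fun P => if (S ∩ P).Nonempty then π P - δ else π P with hπ'def
    set t' : ℝ := t - δ with ht'def
    have hρ'form : ∀ e, ρ' e = ρ e - (if e ∈ S then δ else 0) := by
      intro e; rw [hρ'def]; dsimp only; split_ifs <;> ring
    have hπ'form : ∀ P, π' P = π P - (if (S ∩ P).Nonempty then δ else 0) := by
      intro P; rw [hπ'def]; dsimp only; split_ifs <;> ring
    have hsum' : ∀ P : Finset α, ∑ e ∈ P, ρ' e = ∑ e ∈ P, ρ e - δ * ((S ∩ P).card : ℝ) := by
      intro P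
      rw [Finset.sum_congr rfl (fun e _ => hρ'form e), Finset.sum_sub_distrib,
        Finset.sum_ite_mem, Finset.sum_const, nsmul_eq_mul, inter_comm]
      ring
    -- invariants for the recursive call
    have h0t' : 0 ≤ t' := by rw [ht'def]; linarith
    have hρ0' : ∀ e, 0 ≤ ρ' e := by
      intro e
      rw [hρ'def]; dsimp only
      split_ifs with h
      · linarith [hδρ e h]
      · exact hρ0 e
    have hρt' : ∀ e, ρ' e ≤ t' := by
      intro e
      rw [hρ'def, ht'def]; dsimp only
      split_ifs with h
      · linarith [hρt e]
      · linarith [hδnotS e h]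
    have hπt' : ∀ P : Finset α, π' P ≤ t' := by
      intro P
      rw [hπ'def, ht'def]; dsimp only
      split_ifs with h
      · linarith [hπt P]
      · have hPm : S ∩ P = ∅ := Finset.not_nonempty_iff_eq_empty.mp h
        linarith [hδmiss P hPm]
    have hstar' : ∀ P : Finset α, π' P ≤ ∑ e ∈ P, ρ' e := by
      intro P
      rw [hsum', hπ'def]; dsimp only
      split_ifs with h
      · rcases Nat.lt_or_ge (S ∩ P).card 2 with hk | hk
        · have hk1 : (S ∩ P).card = 1 := by
            have := Finset.card_pos.mpr h
            omega
          rw [hk1]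
          have := hstar P
          push_cast
          linarith
        · have := hδslack P hk
          linarith [hstar P]
      · have hPm : S ∩ P = ∅ := Finset.not_nonempty_iff_eq_empty.mp h
        rw [hPm]
        simp only [Finset.card_empty, Nat.cast_zero, mul_zero]
        linarith [hstar P]
    have hsuper' : ∀ P Q : Finset α, π' P + π' Q ≤ π' (P ∩ Q) + π' (P ∪ Q) := by
      intro P Q
      rw [hπ'form P, hπ'form Q, hπ'form (P ∩ Q), hπ'form (P ∪ Q)]
      have h1 := hit_ineq S P Q δ (le_of_lt hδpos)
      have h2 := hsuper P Q
      linarith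
    -- the measure strictly decreases
    have hρ'le : ∀ e, ρ' e ≤ ρ e := by
      intro e; rw [hρ'form]; split_ifs <;> linarith
    have cA : (univ.filter (fun e : α => 0 < ρ' e)) ⊆ (univ.filter (fun e : α => 0 < ρ e)) := by
      intro e he
      exact mem_filter.mpr ⟨mem_univ _, lt_of_lt_of_le (mem_filter.mp he).2 (hρ'le e)⟩
    have cB : (univ.filter (fun e : α => ρ' e ≠ t')) ⊆ (univ.filter (fun e : α => ρ e ≠ t)) := by
      intro e he
      refine mem_filter.mpr ⟨mem_univ _, fun heq => (mem_filter.mp he).2 ?_⟩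
      have heS : e ∈ S := hVS e heq
      rw [hρ'def, ht'def]; dsimp only
      rw [if_pos heS, heq]
    have cC : (univ.filter (fun P : Finset α => π' P ≠ t')) ⊆
        (univ.filter (fun P : Finset α => π P ≠ t)) := by
      intro P hP
      refine mem_filter.mpr ⟨mem_univ _, fun heq => (mem_filter.mp hP).2 ?_⟩
      rw [hπ'def, ht'def]; dsimp only
      rw [if_pos (hShit P heq), heq]
    have cD : (univ.filter (fun P : Finset α => π' P ≠ ∑ e ∈ P, ρ' e)) ⊆
        (univ.filter (fun P : Finset α => π P ≠ ∑ e ∈ P, ρ e)) := by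
      intro P hP
      refine mem_filter.mpr ⟨mem_univ _, fun heq => (mem_filter.mp hP).2 ?_⟩
      have hk := hScard P heq
      rw [hsum', hπ'form P]
      rcases Nat.eq_or_lt_of_le (Nat.zero_le (S ∩ P).card) with h0 | h0
      · rw [if_neg (by rw [← Finset.card_pos]; omega), ← h0]
        rw [heq]; push_cast; ring
      · have hk1 : (S ∩ P).card = 1 := by omega
        rw [if_pos (Finset.card_pos.mp (by omega)), hk1, heq]
        push_cast; ring
    have cF : (if 0 < t' then (1:ℕ) else 0) ≤ (if 0 < t then (1:ℕ) else 0) := by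
      rw [if_pos ht]
      split_ifs <;> omega
    have hcA := Finset.card_le_card cA
    have hcB := Finset.card_le_card cB
    have hcC := Finset.card_le_card cC
    have hcD := Finset.card_le_card cD
    have hsm : smeas π' ρ' t' < smeas π ρ t := by
      have hδD : δ ∈ D := Finset.min'_mem D hDne
      rw [hDdef] at hδD
      rcases mem_insert.mp hδD with hx | hx
      · -- δ = t : time runs out
        have hflag : (if 0 < t' then (1:ℕ) else 0) < (if 0 < t then (1:ℕ) else 0) := by
          rw [if_pos ht, if_neg (by rw [ht'def, hx]; simp)]
          omega
        unfold smeas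
        omega
      rcases mem_union.mp hx with hx | hx
      rotate_left
      · -- slack ratio attained : new star-tight set
        obtain ⟨P₀, hP₀, hx⟩ := mem_image.mp hx
        have hk : 2 ≤ (S ∩ P₀).card := (mem_filter.mp hP₀).2
        have hden : (0:ℝ) < ((S ∩ P₀).card : ℝ) - 1 := by
          have : (2:ℝ) ≤ ((S ∩ P₀).card : ℝ) := by exact_mod_cast hk
          linarith
        have hslack : ∑ e ∈ P₀, ρ e - π P₀ = δ * (((S ∩ P₀).card : ℝ) - 1) := by
          rw [← hx, div_mul_cancel₀ _ (ne_of_gt hden)]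
        have hold : P₀ ∈ univ.filter (fun P : Finset α => π P ≠ ∑ e ∈ P, ρ e) := by
          refine mem_filter.mpr ⟨mem_univ _, fun heq => ?_⟩
          have : (0:ℝ) < δ * (((S ∩ P₀).card : ℝ) - 1) := mul_pos hδpos hden
          rw [← hslack, heq] at this
          linarith
        have hnew : P₀ ∉ univ.filter (fun P : Finset α => π' P ≠ ∑ e ∈ P, ρ' e) := by
          simp only [mem_filter, mem_univ, true_and, not_not]
          rw [hsum', hπ'form P₀, if_pos (Finset.card_pos.mp (by omega))]
          linarith [hslack]
        have hcD' := Finset.card_lt_card ((Finset.ssubset_iff_of_subset cD).mpr ⟨P₀, hold, hnew⟩)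
        unfold smeas
        omega
      rcases mem_union.mp hx with hx | hx
      rotate_left
      · -- some e₀ ∉ S reaches value t'
        obtain ⟨e₀, he₀, hx⟩ := mem_image.mp hx
        have he₀S : e₀ ∉ S := (mem_filter.mp he₀).2
        have hv : ρ e₀ = t - δ := by linarith [hx]
        have hold : e₀ ∈ univ.filter (fun e : α => ρ e ≠ t) := by
          refine mem_filter.mpr ⟨mem_univ _, fun heq => ?_⟩
          rw [heq] at hv
          linarith
        have hnew : e₀ ∉ univ.filter (fun e : α => ρ' e ≠ t') := by
          simp only [mem_filter, mem_univ, true_and, not_not]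
          rw [hρ'form, if_neg he₀S, ht'def, hv]
          ring
        have hcB' := Finset.card_lt_card ((Finset.ssubset_iff_of_subset cB).mpr ⟨e₀, hold, hnew⟩)
        unfold smeas
        omega
      rcases mem_union.mp hx with hx | hx
      · -- some c₀ ∈ S drops to zero
        obtain ⟨c₀, hc₀, hx⟩ := mem_image.mp hx
        have hold : c₀ ∈ univ.filter (fun e : α => 0 < ρ e) := by
          refine mem_filter.mpr ⟨mem_univ _, ?_⟩
          rw [hx]; exact hδpos
        have hnew : c₀ ∉ univ.filter (fun e : α => 0 < ρ' e) := by
          simp only [mem_filter, mem_univ, true_and, not_lt]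
          rw [hρ'form, if_pos hc₀, hx]
          ring_nf
          exact le_refl 0
        have hcA' := Finset.card_lt_card ((Finset.ssubset_iff_of_subset cA).mpr ⟨c₀, hold, hnew⟩)
        unfold smeas
        omega
      · -- some unhit P₀ becomes t-tight
        obtain ⟨P₀, hP₀, hx⟩ := mem_image.mp hx
        have hPm : S ∩ P₀ = ∅ := (mem_filter.mp hP₀).2
        have hv : π P₀ = t - δ := by linarith [hx]
        have hold : P₀ ∈ univ.filter (fun P : Finset α => π P ≠ t) := by
          refine mem_filter.mpr ⟨mem_univ _, fun heq => ?_⟩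
          rw [heq] at hv
          linarith
        have hnew : P₀ ∉ univ.filter (fun P : Finset α => π' P ≠ t') := by
          simp only [mem_filter, mem_univ, true_and, not_not]
          rw [hπ'form, if_neg (by rw [hPm]; exact Finset.not_nonempty_empty), ht'def, hv]
          ring
        have hcC' := Finset.card_lt_card ((Finset.ssubset_iff_of_subset cC).mpr ⟨P₀, hold, hnew⟩)
        unfold smeas
        omega
    -- recursive call
    obtain ⟨z', hz'0, hz'sum, hz'cov, hz'marg⟩ :=
      ih π' ρ' t' h0t' hρ0' hρt' hπt' hstar' hsuper' (by omega)
    -- assemble the decomposition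
    refine ⟨fun S₀ => z' S₀ + if S₀ = S then δ else 0, ?_, ?_, ?_, ?_⟩
    · intro S₀
      have := hz'0 S₀
      dsimp only
      split_ifs <;> linarith
    · rw [Finset.sum_add_distrib, hz'sum, Finset.sum_ite_eq' univ S (fun _ => δ),
        if_pos (mem_univ S), ht'def]
      ring
    · intro P
      rw [Finset.sum_add_distrib, Finset.sum_ite_eq' _ S (fun _ => δ)]
      have hcov := hz'cov P
      rw [hπ'form P] at hcov
      simp only [mem_filter, mem_univ, true_and]
      by_cases h : (S ∩ P).Nonempty
      · rw [if_pos h]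
        rw [if_pos h] at hcov
        linarith
      · rw [if_neg h]
        rw [if_neg h] at hcov
        linarith
    · intro e
      rw [Finset.sum_add_distrib, Finset.sum_ite_eq' _ S (fun _ => δ)]
      have hmarg := hz'marg e
      rw [hρ'form e] at hmarg
      simp only [mem_filter, mem_univ, true_and]
      by_cases h : e ∈ S
      · rw [if_pos h]
        rw [if_pos h] at hmarg
        linarith
      · rw [if_neg h]
        rw [if_neg h] at hmarg
        linarith

/-- For `PP = 2^E` and supermodular `π`, the system is (⋆)-sufficient: every `ρ ∈ [0,1]^E`
satisfying (⋆) has a feasible decomposition. -/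
theorem supermodular_star_sufficient (π : Finset α → ℝ) (ρ : α → ℝ)
    (hπ1 : ∀ P : Finset α, π P ≤ 1)
    (hsuper : ∀ P Q : Finset α, π P + π Q ≤ π (P ∩ Q) + π (P ∪ Q))
    (hρ : ∀ e, 0 ≤ ρ e ∧ ρ e ≤ 1)
    (hstar : ∀ P : Finset α, π P ≤ ∑ e ∈ P, ρ e) :
    ∃ z, IsFeasibleDecomposition (Finset.univ : Finset (Finset α)) π ρ z := by
  obtain ⟨z, hz0, hzsum, hzcov, hzmarg⟩ :=
    main_rec (smeas π ρ 1) π ρ 1 zero_le_one (fun e => (hρ e).1) (fun e => (hρ e).2)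
      hπ1 hstar hsuper (le_refl _)
  refine ⟨z, fun S => ⟨hz0 S, ?_⟩, hzsum, fun P _ => hzcov P, hzmarg⟩
  calc z S ≤ ∑ S₀ : Finset α, z S₀ :=
        Finset.single_le_sum (fun i _ => hz0 i) (mem_univ S)
    _ = 1 := hzsum
end

section
/- Let E be a finite ground set, (𝒫,⪯) a submodular, consecutive lattice of subsets of E, and π : 𝒫 → (−∞,1] monotone and supermodular w.r.t. the lattice. Let ρ ∈ Y⁺ and let e_1,…,e_m ∈ E and P_1,…,P_m ∈ 𝒫 be a greedy support for ρ. Then there exists a set S ⊆ E with S ⊆ E_ρ and |S ∩ P_i| = 1 for all i ∈ [m], i.e., a set fulfilling condition (good-S) for this greedy support. -/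
open Finset

variable {α : Type*} [Fintype α] [DecidableEq α]

/-- A submodular, consecutive lattice `(PP, ⪯)` of subsets of the finite ground set `E = α`:
a partial order `le` on the collection `sets` in which every pair has a meet (greatest common
lower bound) and a join (least common upper bound), satisfying submodularity (SM) and
consecutivity (CS). -/
structure SubmodConsecLattice (α : Type*) [Fintype α] [DecidableEq α] where
  sets : Finset (Finset α)
  le : Finset α → Finset α → Prop
  meet : Finset α → Finset α → Finset α
  join : Finset α → Finset α → Finset α
  le_refl : ∀ P ∈ sets, le P P
  le_antisymm : ∀ P ∈ sets, ∀ Q ∈ sets, le P Q → le Q P → P = Q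
  le_trans : ∀ P ∈ sets, ∀ Q ∈ sets, ∀ R ∈ sets, le P Q → le Q R → le P R
  meet_mem : ∀ P ∈ sets, ∀ Q ∈ sets, meet P Q ∈ sets
  meet_le_left : ∀ P ∈ sets, ∀ Q ∈ sets, le (meet P Q) P
  meet_le_right : ∀ P ∈ sets, ∀ Q ∈ sets, le (meet P Q) Q
  le_meet : ∀ P ∈ sets, ∀ Q ∈ sets, ∀ R ∈ sets, le R P → le R Q → le R (meet P Q)
  join_mem : ∀ P ∈ sets, ∀ Q ∈ sets, join P Q ∈ sets
  left_le_join : ∀ P ∈ sets, ∀ Q ∈ sets, le P (join P Q)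
  right_le_join : ∀ P ∈ sets, ∀ Q ∈ sets, le Q (join P Q)
  join_le : ∀ P ∈ sets, ∀ Q ∈ sets, ∀ R ∈ sets, le P R → le Q R → le (join P Q) R
  /-- submodularity (SM): `1[e ∈ P∨Q] + 1[e ∈ P∧Q] ≤ 1[e ∈ P] + 1[e ∈ Q]`. -/
  submod : ∀ P ∈ sets, ∀ Q ∈ sets, ∀ e : α,
    (if e ∈ join P Q then (1 : ℕ) else 0) + (if e ∈ meet P Q then 1 else 0) ≤
      (if e ∈ P then 1 else 0) + (if e ∈ Q then 1 else 0)
  /-- consecutivity (CS): `P ∩ R ⊆ Q` whenever `P ≺ Q ≺ R`. -/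
  consec : ∀ P ∈ sets, ∀ Q ∈ sets, ∀ R ∈ sets,
    le P Q → P ≠ Q → le Q R → Q ≠ R → P ∩ R ⊆ Q

/-- `y` lies in the polyhedron `Y⁺ = {y ∈ ℝ^E_{≥0} : ∑_{e ∈ P} y e ≥ π P for all P ∈ PP}`. -/
def MemYplus (PP : Finset (Finset α)) (π : Finset α → ℝ) (y : α → ℝ) : Prop :=
  (∀ e, 0 ≤ y e) ∧ ∀ P ∈ PP, π P ≤ ∑ e ∈ P, y e

/-- `ρ` is an extreme point of `Y⁺`: it lies in `Y⁺` and does not lie in the open segment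
between two distinct points of `Y⁺`. -/
def IsExtremePt (PP : Finset (Finset α)) (π : Finset α → ℝ) (ρ : α → ℝ) : Prop :=
  MemYplus PP π ρ ∧ ∀ y1 y2 : α → ℝ, MemYplus PP π y1 → MemYplus PP π y2 →
    ∀ t : ℝ, 0 < t → t < 1 → (∀ e, ρ e = t * y1 e + (1 - t) * y2 e) → y1 = y2

/-- `es, Ps` form a greedy support for `ρ ∈ Y⁺`: (G1) `es i ∈ Ps i`; (G2) `Ps i` is the
`⪯`-maximum of `{P ∈ PP : P ⊆ E ∖ {es 0, …, es (i-1)}}`; (G3) `π (Ps i) > 0` for all `i` and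
`π Q ≤ 0` for all `Q ∈ PP` avoiding all `es i`; (G4) `ρ` is the unique solution of the
corresponding linear system. -/
def IsGreedySupport (PP : Finset (Finset α)) (le : Finset α → Finset α → Prop)
    (π : Finset α → ℝ) (ρ : α → ℝ) (m : ℕ) (es : Fin m → α) (Ps : Fin m → Finset α) : Prop :=
  (∀ i, es i ∈ Ps i) ∧
  (∀ i, Ps i ∈ PP ∧ (∀ j, j < i → es j ∉ Ps i) ∧
    ∀ P ∈ PP, (∀ j, j < i → es j ∉ P) → le P (Ps i)) ∧
  (∀ i, 0 < π (Ps i)) ∧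
  (∀ Q ∈ PP, (∀ i, es i ∉ Q) → π Q ≤ 0) ∧
  ((∀ i, ∑ x ∈ Ps i, ρ x = π (Ps i)) ∧ (∀ x, (∀ i, x ≠ es i) → ρ x = 0)) ∧
  (∀ ρ' : α → ℝ, (∀ i, ∑ x ∈ Ps i, ρ' x = π (Ps i)) → (∀ x, (∀ i, x ≠ es i) → ρ' x = 0) →
    ρ' = ρ)

/-- `S` fulfils condition (good-S) for the greedy support `Ps`: `S ⊆ E_ρ` and `|S ∩ Ps i| = 1`
for all `i`. -/
def GoodS (ρ : α → ℝ) {m : ℕ} (Ps : Fin m → Finset α) (S : Finset α) : Prop :=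
  (∀ e ∈ S, 0 < ρ e) ∧ ∀ i, (S ∩ Ps i).card = 1

private lemma goodS_aux (PP : Finset (Finset α)) (lle : Finset α → Finset α → Prop)
    (hmax : ∀ P ∈ PP, ∀ Q ∈ PP, ∀ R ∈ PP, lle P Q → P ≠ Q → lle Q R → Q ≠ R → P ∩ R ⊆ Q)
    (π : Finset α → ℝ)
    (hmono : ∀ P ∈ PP, ∀ Q ∈ PP, lle P Q → π P ≤ π Q)
    (ρ : α → ℝ) (hY : MemYplus PP π ρ)
    (m : ℕ) (es : Fin m → α) (Ps : Fin m → Finset α)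
    (hG1 : ∀ i, es i ∈ Ps i)
    (hG2 : ∀ i, Ps i ∈ PP ∧ (∀ j, j < i → es j ∉ Ps i) ∧
      ∀ P ∈ PP, (∀ j, j < i → es j ∉ P) → lle P (Ps i))
    (hG3 : ∀ i, 0 < π (Ps i))
    (hEq : ∀ i, ∑ x ∈ Ps i, ρ x = π (Ps i))
    (hZ : ∀ x, (∀ i, x ≠ es i) → ρ x = 0) :
    ∃ S : Finset α, (∀ e ∈ S, 0 < ρ e) ∧ ∀ i, (S ∩ Ps i).card = 1 := by
  have hρ0 : ∀ e, 0 ≤ ρ e := hY.1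
  have hinj : Function.Injective es := by
    intro i j h
    rcases lt_trichotomy i j with hij | hij | hij
    · exact absurd (by rw [h]; exact hG1 j) ((hG2 j).2.1 i hij)
    · exact hij
    · exact absurd (by rw [← h]; exact hG1 i) ((hG2 i).2.1 j hij)
  have hchain : ∀ k l : Fin m, k ≤ l → lle (Ps l) (Ps k) := by
    intro k l hkl
    exact (hG2 k).2.2 (Ps l) (hG2 l).1 (fun j hj => (hG2 l).2.1 j (lt_of_lt_of_le hj hkl))
  have hne : ∀ k l : Fin m, k < l → Ps k ≠ Ps l := by
    intro k l h heq
    exact (hG2 l).2.1 k h (heq ▸ hG1 k)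
  -- interval property
  have hint : ∀ (j k l : Fin m), k ≤ l → l ≤ j → es j ∈ Ps k → es j ∈ Ps l := by
    intro j k l hkl hlj hmem
    rcases eq_or_lt_of_le hkl with rfl | hkl'
    · exact hmem
    rcases eq_or_lt_of_le hlj with rfl | hlj'
    · exact hG1 _
    exact hmax (Ps j) (hG2 j).1 (Ps l) (hG2 l).1 (Ps k) (hG2 k).1
      (hchain l j hlj'.le) (Ne.symm (hne l j hlj')) (hchain k l hkl'.le)
      (Ne.symm (hne k l hkl')) (Finset.mem_inter.mpr ⟨hG1 j, hmem⟩)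
  -- sum of ρ over Ps t equals sum over indices j with es j ∈ Ps t
  have hsum : ∀ t : Fin m,
      ∑ j ∈ univ.filter (fun j => es j ∈ Ps t), ρ (es j) = π (Ps t) := by
    intro t
    rw [← hEq t]
    rw [← Finset.sum_image (g := es) (f := ρ)
      (fun x _ y _ h => hinj h)]
    apply Finset.sum_subset
    · intro e he
      simp only [Finset.mem_image, Finset.mem_filter, Finset.mem_univ, true_and] at he
      obtain ⟨j, hj, rfl⟩ := he
      exact hj
    · intro e he hne'
      apply hZ
      intro i hei
      exact hne' (by
        simp only [Finset.mem_image, Finset.mem_filter, Finset.mem_univ, true_and]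
        exact ⟨i, hei ▸ he, hei.symm⟩)
  have hkey : ∀ (k k1 i : Fin m), (k : ℕ) + 1 = (k1 : ℕ) → (k1 : ℕ) ≤ (i : ℕ) →
      0 < ρ (es i) → es i ∈ Ps k1 → es i ∉ Ps k → 0 < ρ (es k) := by
    intro k k1 i hk1 hk1i hρi hik1 hik
    have hsub : (univ.filter (fun j => es j ∈ Ps k)) \ {k} ⊆
        (univ.filter (fun j => es j ∈ Ps k1)) \ {i} := by
      intro j hj
      simp only [Finset.mem_sdiff, Finset.mem_filter, Finset.mem_univ, true_and,
        Finset.mem_singleton] at hj ⊢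
      obtain ⟨hjk, hjnek⟩ := hj
      have hkj : k < j := by
        rcases lt_trichotomy j k with h | h | h
        · exact absurd hjk ((hG2 k).2.1 j h)
        · exact absurd h hjnek
        · exact h
      constructor
      · exact hint j k k1 (by rw [Fin.le_def]; omega) (by rw [Fin.le_def]; rw [Fin.lt_def] at hkj; omega) hjk
      · rintro rfl; exact hik hjk
    have h2 : ∑ j ∈ (univ.filter (fun j => es j ∈ Ps k)) \ {k}, ρ (es j) ≤
        ∑ j ∈ (univ.filter (fun j => es j ∈ Ps k1)) \ {i}, ρ (es j) :=
      Finset.sum_le_sum_of_subset_of_nonneg hsub (fun _ _ _ => hρ0 _)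
    have hkmem : k ∈ univ.filter (fun j => es j ∈ Ps k) := by
      simp [hG1 k]
    have himem : i ∈ univ.filter (fun j => es j ∈ Ps k1) := by
      simp [hik1]
    have e1 : ∑ j ∈ univ.filter (fun j => es j ∈ Ps k), ρ (es j) =
        ∑ j ∈ (univ.filter (fun j => es j ∈ Ps k)) \ {k}, ρ (es j) + ρ (es k) :=
      (Finset.sum_eq_sum_sdiff_singleton_add hkmem _)
    have e2 : ∑ j ∈ univ.filter (fun j => es j ∈ Ps k1), ρ (es j) =
        ∑ j ∈ (univ.filter (fun j => es j ∈ Ps k1)) \ {i}, ρ (es j) + ρ (es i) :=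
      (Finset.sum_eq_sum_sdiff_singleton_add himem _)
    have hm : π (Ps k1) ≤ π (Ps k) :=
      hmono (Ps k1) (hG2 k1).1 (Ps k) (hG2 k).1 (hchain k k1 (by rw [Fin.le_def]; omega))
    have s1 := hsum k
    have s2 := hsum k1
    rw [e1] at s1
    rw [e2] at s2
    linarith
  have htop : ∀ hm : 0 < m, 0 < ρ (es ⟨m - 1, by omega⟩) := by
    intro hm
    have hfe : univ.filter (fun j => es j ∈ Ps ⟨m - 1, by omega⟩) = {(⟨m - 1, by omega⟩ : Fin m)} := by
      ext j
      simp only [Finset.mem_filter, Finset.mem_univ, true_and, Finset.mem_singleton]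
      constructor
      · intro hj
        by_contra hne'
        have hj2 : (j : ℕ) < m - 1 := by
          have h1 := j.isLt
          have h2 : (j : ℕ) ≠ m - 1 := fun h => hne' (Fin.ext h)
          omega
        exact (hG2 ⟨m - 1, by omega⟩).2.1 j (by simpa [Fin.lt_def] using hj2) hj
      · rintro rfl; exact hG1 _
    have := hsum ⟨m - 1, by omega⟩
    rw [hfe, Finset.sum_singleton] at this
    rw [this]
    exact hG3 _
  have main : ∀ n : ℕ, ∀ i : Fin m, (i : ℕ) ≤ n → 0 < ρ (es i) →
      ∃ S : Finset α, (∀ e ∈ S, 0 < ρ e) ∧ (∀ e ∈ S, ∃ j : Fin m, j ≤ i ∧ e = es j) ∧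
        (∀ k : Fin m, k ≤ i → (S ∩ Ps k).card = 1) := by
    intro n
    induction n using Nat.strong_induction_on with
    | _ n ih =>
    intro i hin hρi
    set A := univ.filter (fun l : Fin m => es i ∈ Ps l) with hA
    have hiA : i ∈ A := by simp [hA, hG1 i]
    have hAne : A.Nonempty := ⟨i, hiA⟩
    set a := A.min' hAne with ha
    have haA : a ∈ A := A.min'_mem hAne
    have hai : es i ∈ Ps a := (Finset.mem_filter.mp haA).2
    have halei : a ≤ i := A.min'_le i hiA
    have hbelow : ∀ l : Fin m, l < a → es i ∉ Ps l := by
      intro l hl hmem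
      exact absurd (A.min'_le l (by simp [hA, hmem])) (not_le.mpr hl)
    by_cases ha0 : (a : ℕ) = 0
    · refine ⟨{es i}, ?_, ?_, ?_⟩
      · intro e he
        rw [Finset.mem_singleton] at he
        rw [he]; exact hρi
      · intro e he
        rw [Finset.mem_singleton] at he
        exact ⟨i, le_refl i, he⟩
      · intro k hk
        have hik : es i ∈ Ps k := hint i a k (by rw [Fin.le_def]; omega) hk hai
        rw [Finset.singleton_inter_of_mem hik, Finset.card_singleton]
    · have ham : (a : ℕ) - 1 < m := by have := a.isLt; omega
      set k : Fin m := ⟨(a : ℕ) - 1, ham⟩ with hkdef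
      have hklti : (k : ℕ) < (i : ℕ) := by
        have := (Fin.le_def.mp halei); simp [hkdef]; omega
      have hρk : 0 < ρ (es k) := by
        refine hkey k a i (by simp [hkdef]; omega) (Fin.le_def.mp halei) hρi hai
          (hbelow k (by rw [Fin.lt_def]; simp [hkdef]; omega))
      obtain ⟨S', h1, h2, h3⟩ := ih (k : ℕ) (by omega) k le_rfl hρk
      refine ⟨insert (es i) S', ?_, ?_, ?_⟩
      · intro e he
        rcases Finset.mem_insert.mp he with rfl | he'
        · exact hρi
        · exact h1 e he'
      · intro e he
        rcases Finset.mem_insert.mp he with rfl | he'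
        · exact ⟨i, le_refl i, rfl⟩
        · obtain ⟨j, hj, rfl⟩ := h2 e he'
          exact ⟨j, le_trans hj (by rw [Fin.le_def]; simp [hkdef] at *; omega), rfl⟩
      · intro l hl
        by_cases hla : a ≤ l
        · have hil : es i ∈ Ps l := hint i a l hla hl hai
          have hS'l : S' ∩ Ps l = ∅ := by
            rw [Finset.eq_empty_iff_forall_notMem]
            intro e he
            obtain ⟨heS, hePl⟩ := Finset.mem_inter.mp he
            obtain ⟨j, hj, rfl⟩ := h2 e heS
            have hjl : j < l := by
              rw [Fin.lt_def]
              have := Fin.le_def.mp hj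
              have := Fin.le_def.mp hla
              simp [hkdef] at *
              omega
            exact (hG2 l).2.1 j hjl hePl
          rw [Finset.insert_inter_of_mem hil, hS'l]
          simp
        · have hla' : l < a := not_le.mp hla
          have hlk : l ≤ k := by
            rw [Fin.le_def]
            have := Fin.lt_def.mp hla'
            simp [hkdef]
            omega
          rw [Finset.insert_inter_of_notMem (hbelow l hla')]
          exact h3 l hlk
  rcases Nat.eq_zero_or_pos m with hm | hm
  · refine ⟨∅, ?_, ?_⟩
    · intro e he; simp at he
    · intro i; exact absurd i.isLt (by omega)
  · obtain ⟨S, h1, _, h3⟩ := main (m - 1) ⟨m - 1, by omega⟩ le_rfl (htop hm)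
    exact ⟨S, h1, fun k => h3 k (by rw [Fin.le_def]; have := k.isLt; simp; omega)⟩

/-- Given a greedy support for `ρ ∈ Y⁺`, there exists a set `S` fulfilling condition (good-S):
`S ⊆ E_ρ` and `|S ∩ Ps i| = 1` for all `i`. -/
theorem lattice_goodS_exists (L : SubmodConsecLattice α) (π : Finset α → ℝ)
    (hπ1 : ∀ P ∈ L.sets, π P ≤ 1)
    (hsup : ∀ P ∈ L.sets, ∀ Q ∈ L.sets, π P + π Q ≤ π (L.join P Q) + π (L.meet P Q))
    (hmono : ∀ P ∈ L.sets, ∀ Q ∈ L.sets, L.le P Q → π P ≤ π Q)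
    (ρ : α → ℝ) (hY : MemYplus L.sets π ρ)
    (m : ℕ) (es : Fin m → α) (Ps : Fin m → Finset α)
    (hgs : IsGreedySupport L.sets L.le π ρ m es Ps) :
    ∃ S : Finset α, GoodS ρ Ps S := by
  obtain ⟨hG1, hG2, hG3, -, ⟨hEq, hZ⟩, -⟩ := hgs
  obtain ⟨S, h1, h2⟩ := goodS_aux L.sets L.le L.consec π
    (fun P hP Q hQ h => hmono P hP Q hQ h) ρ hY m es Ps hG1 hG2 hG3 hEq hZ
  exact ⟨S, h1, h2⟩
end

section
/- Let E be a finite ground set, (𝒫,⪯) a submodular, consecutive lattice of subsets of E, and π : 𝒫 → (−∞,1] monotone and supermodular w.r.t. the lattice. Let ρ ∈ Y⁺ admit a greedy support e_1,…,e_m, P_1,…,P_m, and let S ⊆ E fulfil condition (good-S) for this greedy support. Then S is an admissible support candidate for π and ρ. -/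
open Finset

variable {α : Type*} [Fintype α] [DecidableEq α]

private lemma sum_chi (ρ : α → ℝ) (X : Finset α) :
    ∑ e ∈ X, ρ e = ∑ e : α, if e ∈ X then ρ e else 0 := by
  rw [Finset.sum_ite_mem, Finset.univ_inter]


/-- (A2): mass outside `P` of join plus meet is at most that of the two arguments. -/
private lemma sdiff_pair_bound (L : SubmodConsecLattice α) (ρ : α → ℝ)
    (hρnn : ∀ e, 0 ≤ ρ e) {X Y : Finset α} (hX : X ∈ L.sets) (hYm : Y ∈ L.sets)
    (P : Finset α) :
    ∑ e ∈ L.join X Y \ P, ρ e + ∑ e ∈ L.meet X Y \ P, ρ e ≤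
      ∑ e ∈ X \ P, ρ e + ∑ e ∈ Y \ P, ρ e := by
  have hpt : ∀ e, (if e ∈ L.join X Y \ P then ρ e else 0) +
      (if e ∈ L.meet X Y \ P then ρ e else 0)
      ≤ (if e ∈ X \ P then ρ e else 0) + (if e ∈ Y \ P then ρ e else 0) := by
    intro e
    by_cases hP : e ∈ P
    · simp [Finset.mem_sdiff, hP]
    · have hsm := L.submod X hX Y hYm e
      have h0 := hρnn e
      simp only [Finset.mem_sdiff, hP, not_false_iff, and_true]
      split_ifs at hsm ⊢ <;> first | linarith | (exact absurd hsm (by omega))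
  rw [sum_chi ρ (L.join X Y \ P), sum_chi ρ (L.meet X Y \ P), sum_chi ρ (X \ P),
    sum_chi ρ (Y \ P), ← Finset.sum_add_distrib, ← Finset.sum_add_distrib]
  exact Finset.sum_le_sum fun e _ => hpt e

/-- Uncrossing: meets and joins of tight sets are tight, and membership counts of
positive elements are preserved. -/
private lemma uncross (L : SubmodConsecLattice α) (π : Finset α → ℝ)
    (hsup : ∀ P ∈ L.sets, ∀ Q ∈ L.sets, π P + π Q ≤ π (L.join P Q) + π (L.meet P Q))
    (ρ : α → ℝ) (hY : MemYplus L.sets π ρ)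
    {X Y : Finset α} (hX : X ∈ L.sets) (hYm : Y ∈ L.sets)
    (tX : ∑ e ∈ X, ρ e = π X) (tY : ∑ e ∈ Y, ρ e = π Y) :
    (∑ e ∈ L.join X Y, ρ e = π (L.join X Y)) ∧
    (∑ e ∈ L.meet X Y, ρ e = π (L.meet X Y)) ∧
    ∀ e, 0 < ρ e →
      ((if e ∈ L.join X Y then (1 : ℕ) else 0) + (if e ∈ L.meet X Y then 1 else 0) =
        (if e ∈ X then 1 else 0) + (if e ∈ Y then 1 else 0)) := by
  obtain ⟨hρnn, hYp⟩ := hY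
  have hJ : L.join X Y ∈ L.sets := L.join_mem X hX Y hYm
  have hM : L.meet X Y ∈ L.sets := L.meet_mem X hX Y hYm
  have hpt : ∀ e, (if e ∈ L.join X Y then ρ e else 0) + (if e ∈ L.meet X Y then ρ e else 0) ≤
      (if e ∈ X then ρ e else 0) + (if e ∈ Y then ρ e else 0) := by
    intro e
    have hsm := L.submod X hX Y hYm e
    have h0 := hρnn e
    split_ifs at hsm ⊢ <;> first | linarith | (exact absurd hsm (by omega))
  have hsums : ∑ e ∈ L.join X Y, ρ e + ∑ e ∈ L.meet X Y, ρ e ≤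
      ∑ e ∈ X, ρ e + ∑ e ∈ Y, ρ e := by
    rw [sum_chi ρ (L.join X Y), sum_chi ρ (L.meet X Y), sum_chi ρ X, sum_chi ρ Y,
      ← Finset.sum_add_distrib, ← Finset.sum_add_distrib]
    exact Finset.sum_le_sum fun e _ => hpt e
  have hπJ : π (L.join X Y) ≤ ∑ e ∈ L.join X Y, ρ e := hYp _ hJ
  have hπM : π (L.meet X Y) ≤ ∑ e ∈ L.meet X Y, ρ e := hYp _ hM
  have hsup' := hsup X hX Y hYm
  refine ⟨by linarith, by linarith, ?_⟩
  intro e he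
  by_contra hne
  have hlt : (if e ∈ L.join X Y then (1 : ℕ) else 0) + (if e ∈ L.meet X Y then 1 else 0) <
      (if e ∈ X then 1 else 0) + (if e ∈ Y then 1 else 0) :=
    lt_of_le_of_ne (L.submod X hX Y hYm e) hne
  have hstrict : (if e ∈ L.join X Y then ρ e else 0) + (if e ∈ L.meet X Y then ρ e else 0) <
      (if e ∈ X then ρ e else 0) + (if e ∈ Y then ρ e else 0) := by
    split_ifs at hlt ⊢ <;> first | linarith | (exact absurd hlt (by omega))
  have htot : ∑ e : α, ((if e ∈ L.join X Y then ρ e else 0) + (if e ∈ L.meet X Y then ρ e else 0)) <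
      ∑ e : α, ((if e ∈ X then ρ e else 0) + (if e ∈ Y then ρ e else 0)) :=
    Finset.sum_lt_sum (fun i _ => hpt i) ⟨e, Finset.mem_univ e, hstrict⟩
  rw [Finset.sum_add_distrib, Finset.sum_add_distrib, ← sum_chi, ← sum_chi, ← sum_chi, ← sum_chi]
    at htot
  linarith

/-- A nonempty join-closed family has a maximum element. -/
private lemma exists_join_max (L : SubmodConsecLattice α) (F : Finset (Finset α))
    (hFs : ∀ X ∈ F, X ∈ L.sets) (hcl : ∀ X ∈ F, ∀ Y ∈ F, L.join X Y ∈ F)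
    (hne : F.Nonempty) : ∃ R ∈ F, ∀ X ∈ F, L.le X R := by
  have aux : ∀ s : Finset (Finset α), (∀ X ∈ s, X ∈ F) → s.Nonempty →
      ∃ R ∈ F, ∀ X ∈ s, L.le X R := by
    intro s
    induction s using Finset.induction_on with
    | empty => exact fun _ h => absurd h (by simp)
    | @insert a s ha ih =>
      intro hsub hne2
      rcases s.eq_empty_or_nonempty with rfl | hsne
      · refine ⟨a, hsub a (by simp), ?_⟩
        intro X hX
        rcases Finset.mem_insert.mp hX with rfl | hX
        · exact L.le_refl X (hFs X (hsub X (by simp)))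
        · simp at hX
      · obtain ⟨R', hR'F, hR'⟩ := ih (fun X hX => hsub X (Finset.mem_insert_of_mem hX)) hsne
        have haF : a ∈ F := hsub a (Finset.mem_insert_self a s)
        have haS : a ∈ L.sets := hFs a haF
        have hR'S : R' ∈ L.sets := hFs R' hR'F
        refine ⟨L.join a R', hcl a haF R' hR'F, ?_⟩
        intro X hX
        rcases Finset.mem_insert.mp hX with rfl | hX2
        · exact L.left_le_join X haS R' hR'S
        · exact L.le_trans X (hFs X (hsub X hX)) R' hR'S (L.join a R')
            (L.join_mem a haS R' hR'S) (hR' X hX2) (L.right_le_join a haS R' hR'S)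
  exact aux F (fun X h => h) hne

private lemma chi_both {J M X Y : Finset α} {e : α}
    (h : (if e ∈ J then (1 : ℕ) else 0) + (if e ∈ M then 1 else 0) =
      (if e ∈ X then 1 else 0) + (if e ∈ Y then 1 else 0))
    (hX : e ∈ X) (hY : e ∈ Y) : e ∈ J ∧ e ∈ M := by
  by_cases h1 : e ∈ J <;> by_cases h2 : e ∈ M <;> simp [h1, h2, hX, hY] at h <;>
    try exact ⟨h1, h2⟩

private lemma chi_one {J M X Y : Finset α} {e : α}
    (h : (if e ∈ J then (1 : ℕ) else 0) + (if e ∈ M then 1 else 0) =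
      (if e ∈ X then 1 else 0) + (if e ∈ Y then 1 else 0))
    (hX : e ∈ X) (hY : e ∉ Y) : (e ∈ J ∧ e ∉ M) ∨ (e ∉ J ∧ e ∈ M) := by
  by_cases h1 : e ∈ J <;> by_cases h2 : e ∈ M <;> simp [h1, h2, hX, hY] at h <;> tauto

private lemma chi_ge1 {J M X Y : Finset α} {e : α}
    (h : (if e ∈ J then (1 : ℕ) else 0) + (if e ∈ M then 1 else 0) =
      (if e ∈ X then 1 else 0) + (if e ∈ Y then 1 else 0))
    (hY : e ∈ Y) : e ∈ J ∨ e ∈ M := by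
  by_cases h1 : e ∈ J <;> by_cases h2 : e ∈ M <;> by_cases h3 : e ∈ X <;>
    simp [h1, h2, h3, hY] at h <;> tauto

private lemma S2_lemma (L : SubmodConsecLattice α) (π : Finset α → ℝ)
    (hsup : ∀ P ∈ L.sets, ∀ Q ∈ L.sets, π P + π Q ≤ π (L.join P Q) + π (L.meet P Q))
    (hmono : ∀ P ∈ L.sets, ∀ Q ∈ L.sets, L.le P Q → π P ≤ π Q)
    (ρ : α → ℝ) (hY : MemYplus L.sets π ρ)
    {m : ℕ} (es : Fin m → α) (Ps : Fin m → Finset α)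
    (hgs : IsGreedySupport L.sets L.le π ρ m es Ps)
    (S : Finset α) (hS : GoodS ρ Ps S) :
    ∀ P ∈ L.sets, (∑ e ∈ P, ρ e = π P) → (S ∩ P).card ≤ 1 := by
  classical
  obtain ⟨hG1, hG2, hG3pos, hG3, ⟨htightPs, hzero⟩, -⟩ := hgs
  obtain ⟨hSpos, hScard⟩ := hS
  have hmem : ∀ i, Ps i ∈ L.sets := fun i => (hG2 i).1
  have hnotin : ∀ i j : Fin m, j < i → es j ∉ Ps i := fun i j h => (hG2 i).2.1 j h
  have hchain : ∀ i j : Fin m, i ≤ j → L.le (Ps j) (Ps i) := by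
    intro i j hij
    exact (hG2 i).2.2 (Ps j) (hmem j) (fun k hk => hnotin j k (lt_of_lt_of_le hk hij))
  have hesne : ∀ i j : Fin m, i ≠ j → es i ≠ es j := by
    intro i j hij heq
    rcases lt_or_gt_of_ne hij with h | h
    · exact hnotin j i h (by rw [heq]; exact hG1 j)
    · exact hnotin i j h (by rw [← heq]; exact hG1 i)
  have hPsne : ∀ i j : Fin m, i < j → Ps i ≠ Ps j := by
    intro i j h heq
    exact hnotin j i h (by rw [← heq]; exact hG1 i)
  have hSsing : ∀ (i : Fin m), ∀ x, x ∈ S → x ∈ Ps i → S ∩ Ps i = {x} := by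
    intro i x hxS hxP
    obtain ⟨t, ht⟩ := Finset.card_eq_one.mp (hScard i)
    have hmem2 : x ∈ S ∩ Ps i := Finset.mem_inter.mpr ⟨hxS, hxP⟩
    have hx : x = t := by rwa [ht, Finset.mem_singleton] at hmem2
    rw [ht, hx]
  have hidx : ∀ x, 0 < ρ x → ∃ i, x = es i := by
    intro x hx
    by_contra h
    push_neg at h
    have := hzero x h
    linarith
  have hcs : ∀ A B C : Finset α, A ∈ L.sets → B ∈ L.sets → C ∈ L.sets →
      L.le A B → A ≠ B → L.le B C → B ≠ C → ∀ x, x ∈ A → x ∈ C → x ∈ B := by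
    intro A B C hA hB hC h1 h2 h3 h4 x hxA hxC
    exact L.consec A hA B hB C hC h1 h2 h3 h4 (Finset.mem_inter.mpr ⟨hxA, hxC⟩)
  by_contra hcon
  push_neg at hcon
  obtain ⟨P0, hP0s, hP0t, hP0c⟩ := hcon
  -- a "bad pair" exists
  have hBadEx : ∃ v : Fin m, ∃ u : Fin m, u < v ∧ es u ∈ S ∧ es v ∈ S ∧
      ∃ X ∈ L.sets, (∑ e ∈ X, ρ e = π X) ∧ es u ∈ X ∧ es v ∈ X := by
    obtain ⟨x, hx, y, hy, hxy⟩ := Finset.one_lt_card.mp hP0c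
    obtain ⟨hxS, hxP⟩ := Finset.mem_inter.mp hx
    obtain ⟨hyS, hyP⟩ := Finset.mem_inter.mp hy
    obtain ⟨i, rfl⟩ := hidx x (hSpos x hxS)
    obtain ⟨j, rfl⟩ := hidx y (hSpos y hyS)
    have hij : i ≠ j := fun h => hxy (by rw [h])
    rcases lt_or_gt_of_ne hij with h | h
    · exact ⟨j, i, h, hxS, hyS, P0, hP0s, hP0t, hxP, hyP⟩
    · exact ⟨i, j, h, hyS, hxS, P0, hP0s, hP0t, hyP, hxP⟩
  set Bad : Fin m → Fin m → Prop := fun u v => u < v ∧ es u ∈ S ∧ es v ∈ S ∧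
      ∃ X ∈ L.sets, (∑ e ∈ X, ρ e = π X) ∧ es u ∈ X ∧ es v ∈ X with hBadDef
  set V : Finset (Fin m) := Finset.univ.filter (fun v => ∃ u, Bad u v) with hVDef
  have hVne : V.Nonempty := by
    obtain ⟨v, u, h⟩ := hBadEx
    exact ⟨v, Finset.mem_filter.mpr ⟨Finset.mem_univ v, u, h⟩⟩
  set v : Fin m := V.min' hVne with hvDef
  have hvV : ∃ u, Bad u v := (Finset.mem_filter.mp (V.min'_mem hVne)).2
  set U : Finset (Fin m) := Finset.univ.filter (fun u => Bad u v) with hUDef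
  have hUne : U.Nonempty := by
    obtain ⟨u0, h⟩ := hvV
    exact ⟨u0, Finset.mem_filter.mpr ⟨Finset.mem_univ u0, h⟩⟩
  set u : Fin m := U.max' hUne with huDef
  have hBaduv : Bad u v := (Finset.mem_filter.mp (U.max'_mem hUne)).2
  have hvmin : ∀ u' v' : Fin m, Bad u' v' → v ≤ v' := by
    intro u' v' hb
    exact V.min'_le v' (Finset.mem_filter.mpr ⟨Finset.mem_univ v', u', hb⟩)
  have humax : ∀ u' : Fin m, Bad u' v → u' ≤ u := by
    intro u' hb
    exact U.le_max' u' (Finset.mem_filter.mpr ⟨Finset.mem_univ u', hb⟩)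
  obtain ⟨huv, hesuS, hesvS, X0, hX0s, hX0t, huX0, hvX0⟩ := hBaduv
  have hρu : 0 < ρ (es u) := hSpos _ hesuS
  have hρv : 0 < ρ (es v) := hSpos _ hesvS
  have hSu : S ∩ Ps u = {es u} := hSsing u (es u) hesuS (hG1 u)
  have hSv : S ∩ Ps v = {es v} := hSsing v (es v) hesvS (hG1 v)
  have hvnotPu : es v ∉ Ps u := by
    intro h
    have h2 : es v ∈ S ∩ Ps u := Finset.mem_inter.mpr ⟨hesvS, h⟩
    rw [hSu, Finset.mem_singleton] at h2
    exact hesne u v huv.ne h2.symm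
  have hunotPv : es u ∉ Ps v := hnotin v u huv

  -- Normalization step A: meet with Ps u
  obtain ⟨tJ1, tM1, hχ1⟩ := uncross L π hsup ρ hY hX0s (hmem u) hX0t (htightPs u)
  have hM1s : L.meet X0 (Ps u) ∈ L.sets := L.meet_mem X0 hX0s (Ps u) (hmem u)
  have hJ1s : L.join X0 (Ps u) ∈ L.sets := L.join_mem X0 hX0s (Ps u) (hmem u)
  have huM1 : es u ∈ L.meet X0 (Ps u) := (chi_both (hχ1 (es u) hρu) huX0 (hG1 u)).2
  have hvM1 : es v ∈ L.meet X0 (Ps u) := by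
    rcases chi_one (hχ1 (es v) hρv) hvX0 hvnotPu with ⟨hJ, -⟩ | ⟨-, hM⟩
    · exfalso
      by_cases hPuJ : Ps u = L.join X0 (Ps u)
      · rw [← hPuJ] at hJ; exact hvnotPu hJ
      · exact hvnotPu (hcs (Ps v) (Ps u) (L.join X0 (Ps u)) (hmem v) (hmem u) hJ1s
          (hchain u v huv.le) (hPsne u v huv).symm
          (L.right_le_join X0 hX0s (Ps u) (hmem u)) hPuJ (es v) (hG1 v) hJ)
    · exact hM
  -- Normalization step B: join with Ps v
  obtain ⟨tR0, tM2, hχ2⟩ := uncross L π hsup ρ hY hM1s (hmem v) tM1 (htightPs v)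
  have hR0s : L.join (L.meet X0 (Ps u)) (Ps v) ∈ L.sets :=
    L.join_mem _ hM1s (Ps v) (hmem v)
  have hM2s : L.meet (L.meet X0 (Ps u)) (Ps v) ∈ L.sets :=
    L.meet_mem _ hM1s (Ps v) (hmem v)
  have hvR0 : es v ∈ L.join (L.meet X0 (Ps u)) (Ps v) :=
    (chi_both (hχ2 (es v) hρv) hvM1 (hG1 v)).1
  have huR0 : es u ∈ L.join (L.meet X0 (Ps u)) (Ps v) := by
    rcases chi_one (hχ2 (es u) hρu) huM1 hunotPv with ⟨hJ, -⟩ | ⟨-, hM⟩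
    · exact hJ
    · exfalso
      by_cases hM2Pv : L.meet (L.meet X0 (Ps u)) (Ps v) = Ps v
      · rw [hM2Pv] at hM; exact hunotPv hM
      · exact hunotPv (hcs (L.meet (L.meet X0 (Ps u)) (Ps v)) (Ps v) (Ps u)
          hM2s (hmem v) (hmem u)
          (L.meet_le_right _ hM1s (Ps v) (hmem v)) hM2Pv
          (hchain u v huv.le) (hPsne u v huv).symm (es u) hM (hG1 u))
  have hlePvR0 : L.le (Ps v) (L.join (L.meet X0 (Ps u)) (Ps v)) :=
    L.right_le_join _ hM1s (Ps v) (hmem v)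
  have hleR0Pu : L.le (L.join (L.meet X0 (Ps u)) (Ps v)) (Ps u) :=
    L.join_le _ hM1s (Ps v) (hmem v) (Ps u) (hmem u)
      (L.meet_le_right X0 hX0s (Ps u) (hmem u)) (hchain u v huv.le)
  -- the family of tight sets containing the bad pair, sandwiched between Ps v and Ps u
  set F : Finset (Finset α) := L.sets.filter (fun X => (∑ e ∈ X, ρ e = π X) ∧ es u ∈ X ∧
    es v ∈ X ∧ L.le (Ps v) X ∧ L.le X (Ps u)) with hFDef
  have hFs : ∀ X ∈ F, X ∈ L.sets := fun X h => (Finset.mem_filter.mp h).1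
  have hFcl : ∀ X ∈ F, ∀ Y ∈ F, L.join X Y ∈ F := by
    intro X hXF Y hYF
    obtain ⟨hXs, tX, huX, hvX, hPvX, hXPu⟩ := Finset.mem_filter.mp hXF
    obtain ⟨hYs, tYt, huY, hvY, hPvY, hYPu⟩ := Finset.mem_filter.mp hYF
    obtain ⟨tJ, tM, hχ⟩ := uncross L π hsup ρ hY hXs hYs tX tYt
    have hJs : L.join X Y ∈ L.sets := L.join_mem X hXs Y hYs
    exact Finset.mem_filter.mpr ⟨hJs, tJ, (chi_both (hχ (es u) hρu) huX huY).1,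
      (chi_both (hχ (es v) hρv) hvX hvY).1,
      L.le_trans (Ps v) (hmem v) X hXs (L.join X Y) hJs hPvX (L.left_le_join X hXs Y hYs),
      L.join_le X hXs Y hYs (Ps u) (hmem u) hXPu hYPu⟩
  have hFne : F.Nonempty :=
    ⟨L.join (L.meet X0 (Ps u)) (Ps v),
      Finset.mem_filter.mpr ⟨hR0s, tR0, huR0, hvR0, hlePvR0, hleR0Pu⟩⟩
  obtain ⟨R, hRF, hRmax⟩ := exists_join_max L F hFs hFcl hFne
  obtain ⟨hRs, tR, huR, hvR, hPvR, hRPu⟩ := Finset.mem_filter.mp hRF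
  have hRnePu : R ≠ Ps u := fun h => hvnotPu (by rw [← h]; exact hvR)
  have hRnePv : R ≠ Ps v := fun h => hunotPv (by rw [← h]; exact huR)
  -- main claim: every positive element of Ps u lies in R
  have hclaim : ∀ x ∈ Ps u, 0 < ρ x → x ∈ R := by
    intro x hxPu hρx
    by_contra hxR
    have hxne_u : x ≠ es u := fun h => hxR (by rw [h]; exact huR)
    have hxnPv : x ∉ Ps v := by
      intro hxPv
      exact hxR (hcs (Ps v) R (Ps u) (hmem v) hRs (hmem u) hPvR (Ne.symm hRnePv)
        hRPu hRnePu x hxPv hxPu)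
    obtain ⟨d, rfl⟩ := hidx x hρx
    have hdu : d ≠ u := fun h => hxne_u (by rw [h])
    have hud : u < d := by
      rcases lt_or_gt_of_ne hdu with h | h
      · exact absurd hxPu (hnotin u d h)
      · exact h
    have hdnev : d ≠ v := by
      intro h
      rw [h] at hxR
      exact hxR hvR
    have hdv : d < v := by
      rcases lt_or_gt_of_ne hdnev with h | h
      · exact h
      · exact absurd (hcs (Ps d) (Ps v) (Ps u) (hmem d) (hmem v) (hmem u)
          (hchain v d h.le) (hPsne v d h).symm (hchain u v huv.le)
          (hPsne u v huv).symm (es d) (hG1 d) hxPu) hxnPv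
    -- the S-element of Ps d
    obtain ⟨t0, ht0⟩ := Finset.card_eq_one.mp (hScard d)
    have ht0m : t0 ∈ S ∩ Ps d := by rw [ht0]; exact Finset.mem_singleton_self t0
    have ht0S : t0 ∈ S := (Finset.mem_inter.mp ht0m).1
    have ht0Pd : t0 ∈ Ps d := (Finset.mem_inter.mp ht0m).2
    have hρt0 : 0 < ρ t0 := hSpos t0 ht0S
    obtain ⟨c, rfl⟩ := hidx t0 hρt0
    have hcd_ne : c ≠ d := by
      intro h
      rw [h] at ht0S
      have h2 : es d ∈ S ∩ Ps u := Finset.mem_inter.mpr ⟨ht0S, hxPu⟩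
      rw [hSu, Finset.mem_singleton] at h2
      exact hxne_u h2
    have hdc : d < c := by
      rcases lt_or_gt_of_ne hcd_ne with h | h
      · exact absurd ht0Pd (hnotin d c h)
      · exact h
    have hcv_le : c ≤ v := by
      by_contra h
      push_neg at h
      have h2 : es c ∈ Ps v := hcs (Ps c) (Ps v) (Ps d) (hmem c) (hmem v) (hmem d)
        (hchain v c h.le) (hPsne v c h).symm (hchain d v hdv.le) (hPsne d v hdv).symm
        (es c) (hG1 c) ht0Pd
      have h3 : es c ∈ S ∩ Ps v := Finset.mem_inter.mpr ⟨ht0S, h2⟩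
      rw [hSv, Finset.mem_singleton] at h3
      exact hesne c v h.ne' h3
    -- uncross R with Ps d
    obtain ⟨tJd, tMd, hχd⟩ := uncross L π hsup ρ hY hRs (hmem d) tR (htightPs d)
    have hJds : L.join R (Ps d) ∈ L.sets := L.join_mem R hRs (Ps d) (hmem d)
    have hMds : L.meet R (Ps d) ∈ L.sets := L.meet_mem R hRs (Ps d) (hmem d)
    have hunotPd : es u ∉ Ps d := hnotin d u hud
    have huJd : es u ∈ L.join R (Ps d) := by
      rcases chi_one (hχd (es u) hρu) huR hunotPd with ⟨hJ, -⟩ | ⟨-, hM⟩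
      · exact hJ
      · exfalso
        by_cases hMdPd : L.meet R (Ps d) = Ps d
        · rw [hMdPd] at hM; exact hunotPd hM
        · exact hunotPd (hcs (L.meet R (Ps d)) (Ps d) (Ps u) hMds (hmem d) (hmem u)
            (L.meet_le_right R hRs (Ps d) (hmem d)) hMdPd (hchain u d hud.le)
            (hPsne u d hud).symm (es u) hM (hG1 u))
    have hvJd : es v ∈ L.join R (Ps d) := by
      by_cases hcv : c = v
      · rw [hcv] at ht0Pd
        exact (chi_both (hχd (es v) hρv) hvR ht0Pd).1
      · have hcv' : c < v := lt_of_le_of_ne hcv_le hcv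
        have hcMd : es c ∈ L.meet R (Ps d) := by
          rcases chi_ge1 (hχd (es c) hρt0) ht0Pd with h | h
          · exfalso
            have hbad : Bad u c := ⟨lt_trans hud hdc, hesuS, ht0S,
              L.join R (Ps d), hJds, tJd, huJd, h⟩
            exact absurd (hvmin u c hbad) (not_le.mpr hcv')
          · exact h
        have hvnotPd : es v ∉ Ps d := by
          intro h
          have h2 : es v ∈ S ∩ Ps d := Finset.mem_inter.mpr ⟨hesvS, h⟩
          rw [ht0, Finset.mem_singleton] at h2
          exact hesne v c (Ne.symm (ne_of_lt hcv')) h2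
        rcases chi_one (hχd (es v) hρv) hvR hvnotPd with ⟨hJ, -⟩ | ⟨-, hM⟩
        · exact hJ
        · exfalso
          have hbad : Bad c v := ⟨hcv', ht0S, hesvS, L.meet R (Ps d), hMds, tMd, hcMd, hM⟩
          exact absurd (humax c hbad) (not_le.mpr (lt_trans hud hdc))
    have hJdF : L.join R (Ps d) ∈ F := Finset.mem_filter.mpr ⟨hJds, tJd, huJd, hvJd,
      L.le_trans (Ps v) (hmem v) R hRs (L.join R (Ps d)) hJds hPvR
        (L.left_le_join R hRs (Ps d) (hmem d)),
      L.join_le R hRs (Ps d) (hmem d) (Ps u) (hmem u) hRPu (hchain u d hud.le)⟩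
    have hJdR : L.join R (Ps d) = R := L.le_antisymm (L.join R (Ps d)) hJds R hRs
      (hRmax _ hJdF) (L.left_le_join R hRs (Ps d) (hmem d))
    have hlePdR : L.le (Ps d) R := by
      rw [← hJdR]
      exact L.right_le_join R hRs (Ps d) (hmem d)
    exact hxR (hcs (Ps d) R (Ps u) (hmem d) hRs (hmem u) hlePdR
      (fun h => hunotPd (by rw [h]; exact huR)) hRPu hRnePu (es d) (hG1 d) hxPu)
  -- final weight contradiction
  have hsum1 : ∑ e ∈ Ps u \ R, ρ e = 0 := by
    apply Finset.sum_eq_zero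
    intro e he
    obtain ⟨hePu, heR⟩ := Finset.mem_sdiff.mp he
    by_contra h
    exact heR (hclaim e hePu (lt_of_le_of_ne (hY.1 e) (Ne.symm h)))
  have hsplit : ∑ e ∈ Ps u ∩ R, ρ e + ∑ e ∈ Ps u \ R, ρ e = ∑ e ∈ Ps u, ρ e :=
    Finset.sum_inter_add_sum_sdiff (Ps u) R ρ
  have hsub : insert (es v) (Ps u ∩ R) ⊆ R := by
    intro e he
    rcases Finset.mem_insert.mp he with rfl | h
    · exact hvR
    · exact (Finset.mem_inter.mp h).2
  have hvnotin : es v ∉ Ps u ∩ R := fun h => hvnotPu (Finset.mem_inter.mp h).1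
  have hsum2 : ρ (es v) + ∑ e ∈ Ps u ∩ R, ρ e ≤ ∑ e ∈ R, ρ e := by
    have h2 := Finset.sum_le_sum_of_subset_of_nonneg hsub (fun i _ _ => hY.1 i)
    rwa [Finset.sum_insert hvnotin] at h2
  have hπR : π R ≤ π (Ps u) := hmono R hRs (Ps u) (hmem u) hRPu
  have hPut := htightPs u
  linarith


private lemma S3_lemma (L : SubmodConsecLattice α) (π : Finset α → ℝ)
    (hsup : ∀ P ∈ L.sets, ∀ Q ∈ L.sets, π P + π Q ≤ π (L.join P Q) + π (L.meet P Q))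
    (hmono : ∀ P ∈ L.sets, ∀ Q ∈ L.sets, L.le P Q → π P ≤ π Q)
    (ρ : α → ℝ) (hY : MemYplus L.sets π ρ)
    {m : ℕ} (es : Fin m → α) (Ps : Fin m → Finset α)
    (hgs : IsGreedySupport L.sets L.le π ρ m es Ps)
    (S : Finset α) (hS : GoodS ρ Ps S) :
    ∀ P, NonDominated π ρ (L.sets.filter fun Q => 0 < π Q) P → 1 ≤ (S ∩ P).card := by
  classical
  obtain ⟨hG1, hG2, hG3pos, hG3, ⟨htightPs, hzero⟩, -⟩ := hgs
  obtain ⟨hSpos, hScard⟩ := hS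
  have hmem : ∀ i, Ps i ∈ L.sets := fun i => (hG2 i).1
  have hnotin : ∀ i j : Fin m, j < i → es j ∉ Ps i := fun i j h => (hG2 i).2.1 j h
  have hmax : ∀ i, ∀ P ∈ L.sets, (∀ j, j < i → es j ∉ P) → L.le P (Ps i) := fun i => (hG2 i).2.2
  have hchain : ∀ i j : Fin m, i ≤ j → L.le (Ps j) (Ps i) := by
    intro i j hij
    exact hmax i (Ps j) (hmem j) (fun k hk => hnotin j k (lt_of_lt_of_le hk hij))
  have hPsne : ∀ i j : Fin m, i < j → Ps i ≠ Ps j := by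
    intro i j h heq
    exact hnotin j i h (by rw [← heq]; exact hG1 i)
  have hSsing : ∀ (i : Fin m), ∀ x, x ∈ S → x ∈ Ps i → S ∩ Ps i = {x} := by
    intro i x hxS hxP
    obtain ⟨t, ht⟩ := Finset.card_eq_one.mp (hScard i)
    have hmem2 : x ∈ S ∩ Ps i := Finset.mem_inter.mpr ⟨hxS, hxP⟩
    have hx : x = t := by rwa [ht, Finset.mem_singleton] at hmem2
    rw [ht, hx]
  have hidx : ∀ x, 0 < ρ x → ∃ i, x = es i := by
    intro x hx
    by_contra h
    push_neg at h
    have := hzero x h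
    linarith
  have hcs : ∀ A B C : Finset α, A ∈ L.sets → B ∈ L.sets → C ∈ L.sets →
      L.le A B → A ≠ B → L.le B C → B ≠ C → ∀ x, x ∈ A → x ∈ C → x ∈ B := by
    intro A B C hA hB hC h1 h2 h3 h4 x hxA hxC
    exact L.consec A hA B hB C hC h1 h2 h3 h4 (Finset.mem_inter.mpr ⟨hxA, hxC⟩)
  have MAIN : ∀ n : ℕ, ∀ P, (L.sets.filter fun X => L.le P X).card ≤ n → P ∈ L.sets →
      0 < π P → S ∩ P = ∅ →
      (∀ Q ∈ L.sets.filter fun Q => 0 < π Q, Q ≠ P → ¬ Dominates π ρ P Q) → False := by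
    intro n
    induction n with
    | zero =>
      intro P hcard hPs _ _ _
      have h1 : P ∈ L.sets.filter fun X => L.le P X :=
        Finset.mem_filter.mpr ⟨hPs, L.le_refl P hPs⟩
      have := Finset.card_pos.mpr ⟨P, h1⟩
      omega
    | succ n ih =>
      intro P hcard hPs hπP hSP hnd
      -- minimal member index i0 of P
      have hIne : (Finset.univ.filter fun j : Fin m => es j ∈ P).Nonempty := by
        by_contra h
        rw [Finset.not_nonempty_iff_eq_empty] at h
        have h2 : ∀ j : Fin m, es j ∉ P := by
          intro j hj
          have : j ∈ Finset.univ.filter fun j : Fin m => es j ∈ P :=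
            Finset.mem_filter.mpr ⟨Finset.mem_univ j, hj⟩
          rw [h] at this
          exact absurd this (Finset.notMem_empty j)
        exact absurd (hG3 P hPs h2) (not_le.mpr hπP)
      have hi0P : es ((Finset.univ.filter fun j : Fin m => es j ∈ P).min' hIne) ∈ P :=
        (Finset.mem_filter.mp (Finset.min'_mem _ hIne)).2
      set i0 : Fin m := (Finset.univ.filter fun j : Fin m => es j ∈ P).min' hIne with hi0def
      have hi0min : ∀ j : Fin m, es j ∈ P → i0 ≤ j := fun j hj =>
        Finset.min'_le _ j (Finset.mem_filter.mpr ⟨Finset.mem_univ j, hj⟩)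
      have hlePK : L.le P (Ps i0) :=
        hmax i0 P hPs (fun j hj hjP => absurd (hi0min j hjP) (not_le.mpr hj))
      -- the S-element of K := Ps i0
      obtain ⟨y0, hy0⟩ := Finset.card_eq_one.mp (hScard i0)
      have hy0m : y0 ∈ S ∩ Ps i0 := by rw [hy0]; exact Finset.mem_singleton_self y0
      have hy0S : y0 ∈ S := (Finset.mem_inter.mp hy0m).1
      have hy0K : y0 ∈ Ps i0 := (Finset.mem_inter.mp hy0m).2
      have hρy0 : 0 < ρ y0 := hSpos y0 hy0S
      have hy0nP : y0 ∉ P := by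
        intro h
        have h2 : y0 ∈ S ∩ P := Finset.mem_inter.mpr ⟨hy0S, h⟩
        rw [hSP] at h2
        exact absurd h2 (Finset.notMem_empty y0)
      have hKneP : Ps i0 ≠ P := fun h => hy0nP (by rw [← h]; exact hy0K)
      -- front door: try K as dominator
      by_cases hdoor : π P ≤ ∑ e ∈ P ∩ Ps i0, ρ e
      · have h1 : ∑ e ∈ P ∩ Ps i0, ρ e ≤ ∑ e ∈ (Ps i0).erase y0, ρ e := by
          apply Finset.sum_le_sum_of_subset_of_nonneg
          · intro x hx
            obtain ⟨hxP, hxK⟩ := Finset.mem_inter.mp hx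
            exact Finset.mem_erase.mpr ⟨fun h => hy0nP (by rw [← h]; exact hxP), hxK⟩
          · exact fun i _ _ => hY.1 i
        have h2 : ∑ e ∈ (Ps i0).erase y0, ρ e = ∑ e ∈ Ps i0, ρ e - ρ y0 :=
          Finset.sum_erase_eq_sub hy0K
        have hsplitK : ∑ e ∈ Ps i0 ∩ P, ρ e + ∑ e ∈ Ps i0 \ P, ρ e = ∑ e ∈ Ps i0, ρ e :=
          Finset.sum_inter_add_sum_sdiff _ _ _
        have hinterc : ∑ e ∈ P ∩ Ps i0, ρ e = ∑ e ∈ Ps i0 ∩ P, ρ e := by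
          rw [Finset.inter_comm]
        exact hnd (Ps i0) (Finset.mem_filter.mpr ⟨hmem i0, hG3pos i0⟩) hKneP
          (Or.inr ⟨by rw [← htightPs i0]; linarith, by rw [← htightPs i0]; linarith⟩)
      push_neg at hdoor
      -- positive elements of P outside K exist
      have hBne : (Finset.univ.filter
          (fun d : Fin m => es d ∈ P ∧ es d ∉ Ps i0 ∧ 0 < ρ (es d))).Nonempty := by
        by_contra hB
        rw [Finset.not_nonempty_iff_eq_empty] at hB
        have hzero2 : ∑ e ∈ P \ Ps i0, ρ e = 0 := by
          apply Finset.sum_eq_zero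
          intro e he
          obtain ⟨heP, heK⟩ := Finset.mem_sdiff.mp he
          by_contra h
          have hpos : 0 < ρ e := lt_of_le_of_ne (hY.1 e) (Ne.symm h)
          obtain ⟨d, rfl⟩ := hidx e hpos
          have hd : d ∈ Finset.univ.filter
              (fun d : Fin m => es d ∈ P ∧ es d ∉ Ps i0 ∧ 0 < ρ (es d)) :=
            Finset.mem_filter.mpr ⟨Finset.mem_univ d, heP, heK, hpos⟩
          rw [hB] at hd
          exact absurd hd (Finset.notMem_empty d)
        have hsplitP : ∑ e ∈ P ∩ Ps i0, ρ e + ∑ e ∈ P \ Ps i0, ρ e = ∑ e ∈ P, ρ e :=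
          Finset.sum_inter_add_sum_sdiff _ _ _
        have := hY.2 P hPs
        linarith
      set b := (Finset.univ.filter
        (fun d : Fin m => es d ∈ P ∧ es d ∉ Ps i0 ∧ 0 < ρ (es d))).max' hBne with hbdef
      have hbfacts : es b ∈ P ∧ es b ∉ Ps i0 ∧ 0 < ρ (es b) :=
        (Finset.mem_filter.mp (Finset.max'_mem _ hBne)).2
      have hbmax : ∀ d : Fin m, es d ∈ P → es d ∉ Ps i0 → 0 < ρ (es d) → d ≤ b :=
        fun d h1 h2 h3 =>
        Finset.le_max' _ d (Finset.mem_filter.mpr ⟨Finset.mem_univ d, h1, h2, h3⟩)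
      have hi0b : i0 < b := by
        rcases lt_or_eq_of_le (hi0min b hbfacts.1) with h | h
        · exact h
        · exfalso; apply hbfacts.2.1; rw [← h]; exact hG1 i0
      -- the non-below zone
      have hNLne : (Finset.univ.filter fun j : Fin m => ¬ L.le (Ps j) P).Nonempty := by
        refine ⟨i0, Finset.mem_filter.mpr ⟨Finset.mem_univ i0, fun h => ?_⟩⟩
        exact hKneP (L.le_antisymm (Ps i0) (hmem i0) P hPs h hlePK)
      set c := (Finset.univ.filter fun j : Fin m => ¬ L.le (Ps j) P).max' hNLne with hcdef
      have hcNL : ¬ L.le (Ps c) P := (Finset.mem_filter.mp (Finset.max'_mem _ hNLne)).2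
      have hcmax : ∀ j : Fin m, ¬ L.le (Ps j) P → j ≤ c := fun j h =>
        Finset.le_max' _ j (Finset.mem_filter.mpr ⟨Finset.mem_univ j, h⟩)
      have hgtc : ∀ j : Fin m, c < j → L.le (Ps j) P := by
        intro j hj
        by_contra h
        exact absurd (hcmax j h) (not_le.mpr hj)
      have hlec : ∀ j : Fin m, j ≤ c → ¬ L.le (Ps j) P := by
        intro j hj h
        exact hcNL (L.le_trans (Ps c) (hmem c) (Ps j) (hmem j) P hPs (hchain j c hj) h)
      by_cases hAB : L.le (Ps b) P
      · -- CASE B: iteration kill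
        have hcb : c < b := by
          by_contra h
          push_neg at h
          exact hlec b h hAB
        have hc1lt : (c : ℕ) + 1 < m := by
          have h1 : (c : ℕ) < (b : ℕ) := hcb
          have h2 := b.isLt
          omega
        have hc1P : L.le (Ps ⟨(c : ℕ) + 1, hc1lt⟩) P := by
          apply hgtc
          exact Fin.lt_def.mpr (by simp)
        have AUXB : ∀ d : ℕ, ∀ k : ℕ, ∀ X, X ∈ L.sets → L.le X P →
            L.le (Ps ⟨(c : ℕ) + 1, hc1lt⟩) X → S ∩ X = ∅ →
            (∀ j : Fin m, es j ∈ X → k ≤ (j : ℕ)) → m + 1 - k ≤ d → False := by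
          intro d
          induction d with
          | zero =>
            intro k X hXs hXP hc1X hSX hbound hd
            have hmemX : ∃ j : Fin m, es j ∈ X := by
              by_contra h
              push_neg at h
              have h1 : L.le X (Ps ⟨(c : ℕ) + 1, hc1lt⟩) :=
                hmax _ X hXs (fun j _ => h j)
              have h2 : X = Ps ⟨(c : ℕ) + 1, hc1lt⟩ :=
                L.le_antisymm X hXs _ (hmem _) h1 hc1X
              exact h ⟨(c : ℕ) + 1, hc1lt⟩ (by rw [h2]; exact hG1 _)
            obtain ⟨j, hj⟩ := hmemX
            have h1 := hbound j hj
            have h2 := j.isLt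
            omega
          | succ d ihd =>
            intro k X hXs hXP hc1X hSX hbound hd
            -- minimal member index of X
            have hMne : (Finset.univ.filter fun j : Fin m => es j ∈ X).Nonempty := by
              by_contra h
              rw [Finset.not_nonempty_iff_eq_empty] at h
              have h0 : ∀ j : Fin m, es j ∉ X := by
                intro j hj
                have : j ∈ Finset.univ.filter fun j : Fin m => es j ∈ X :=
                  Finset.mem_filter.mpr ⟨Finset.mem_univ j, hj⟩
                rw [h] at this
                exact absurd this (Finset.notMem_empty j)
              have h1 : L.le X (Ps ⟨(c : ℕ) + 1, hc1lt⟩) :=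
                hmax _ X hXs (fun j _ => h0 j)
              have h2 : X = Ps ⟨(c : ℕ) + 1, hc1lt⟩ :=
                L.le_antisymm X hXs _ (hmem _) h1 hc1X
              exact h0 ⟨(c : ℕ) + 1, hc1lt⟩ (by rw [h2]; exact hG1 _)
            have hiX : es ((Finset.univ.filter fun j : Fin m => es j ∈ X).min' hMne) ∈ X :=
              (Finset.mem_filter.mp (Finset.min'_mem _ hMne)).2
            set i := (Finset.univ.filter fun j : Fin m => es j ∈ X).min' hMne with hidef
            have himin : ∀ j : Fin m, es j ∈ X → i ≤ j := fun j hj =>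
              Finset.min'_le _ j (Finset.mem_filter.mpr ⟨Finset.mem_univ j, hj⟩)
            have hleXK : L.le X (Ps i) :=
              hmax i X hXs (fun j hj hjX => absurd (himin j hjX) (not_le.mpr hj))
            -- S-element of Ps i
            obtain ⟨y, hy⟩ := Finset.card_eq_one.mp (hScard i)
            have hym : y ∈ S ∩ Ps i := by rw [hy]; exact Finset.mem_singleton_self y
            have hyS : y ∈ S := (Finset.mem_inter.mp hym).1
            have hyK : y ∈ Ps i := (Finset.mem_inter.mp hym).2
            have hρy : 0 < ρ y := hSpos y hyS
            obtain ⟨s, rfl⟩ := hidx y hρy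
            have hynX : es s ∉ X := by
              intro h
              have h2 : es s ∈ S ∩ X := Finset.mem_inter.mpr ⟨hyS, h⟩
              rw [hSX] at h2
              exact absurd h2 (Finset.notMem_empty _)
            have his : i < s := by
              have h1 : i ≤ s := by
                by_contra h
                push_neg at h
                exact hnotin i s h hyK
              rcases lt_or_eq_of_le h1 with h | h
              · exact h
              · exfalso
                rw [← h] at hyS
                have h2 : es i ∈ S ∩ X := Finset.mem_inter.mpr ⟨hyS, hiX⟩
                rw [hSX] at h2
                exact absurd h2 (Finset.notMem_empty _)
            by_cases hsc : s ≤ c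
            · -- iteration step
              have hnleXs : ¬ L.le (Ps s) X := by
                intro h
                exact hlec s hsc (L.le_trans (Ps s) (hmem s) X hXs P hPs h hXP)
              have hJs : L.join X (Ps s) ∈ L.sets := L.join_mem X hXs (Ps s) (hmem s)
              have hMs : L.meet X (Ps s) ∈ L.sets := L.meet_mem X hXs (Ps s) (hmem s)
              have hleJK : L.le (L.join X (Ps s)) (Ps i) :=
                L.join_le X hXs (Ps s) (hmem s) (Ps i) (hmem i) hleXK (hchain i s (le_of_lt his))
              have hiJ : es i ∈ L.join X (Ps s) := by
                by_cases hJK : L.join X (Ps s) = Ps i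
                · rw [hJK]; exact hG1 i
                · have hXJ : X ≠ L.join X (Ps s) := by
                    intro h
                    apply hnleXs
                    have h2 := L.right_le_join X hXs (Ps s) (hmem s)
                    rwa [← h] at h2
                  exact hcs X (L.join X (Ps s)) (Ps i) hXs hJs (hmem i)
                    (L.left_le_join X hXs (Ps s) (hmem s)) hXJ hleJK hJK (es i) hiX (hG1 i)
              have hyJ : es s ∈ L.join X (Ps s) := by
                by_cases hJK : L.join X (Ps s) = Ps i
                · rw [hJK]; exact hyK
                · have hPsJ : Ps s ≠ L.join X (Ps s) := by
                    intro h
                    have h2 : es i ∈ Ps s := by rw [h]; exact hiJ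
                    exact hnotin s i his h2
                  exact hcs (Ps s) (L.join X (Ps s)) (Ps i) (hmem s) hJs (hmem i)
                    (L.right_le_join X hXs (Ps s) (hmem s)) hPsJ hleJK hJK (es s) (hG1 s) hyK
              have hynM : es s ∉ L.meet X (Ps s) := by
                intro h
                have hsm := L.submod X hXs (Ps s) (hmem s) (es s)
                rw [if_pos hyJ, if_pos h, if_neg hynX, if_pos (hG1 s)] at hsm
                omega
              have hMnePs : L.meet X (Ps s) ≠ Ps s := by
                intro heq
                apply hnleXs
                have h2 := L.meet_le_left X hXs (Ps s) (hmem s)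
                rwa [heq] at h2
              have hMbound : ∀ j : Fin m, es j ∈ L.meet X (Ps s) → s < j := by
                intro j hjM
                rcases lt_trichotomy j s with h | h | h
                · exfalso
                  have h2 : es j ∈ Ps s := hcs (L.meet X (Ps s)) (Ps s) (Ps j) hMs (hmem s)
                    (hmem j) (L.meet_le_right X hXs (Ps s) (hmem s)) hMnePs
                    (hchain j s (le_of_lt h)) (Ne.symm (hPsne j s h)) (es j) hjM (hG1 j)
                  exact hnotin s j h h2
                · exfalso; rw [h] at hjM; exact hynM hjM
                · exact h
              have hSM : S ∩ L.meet X (Ps s) = ∅ := by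
                rw [Finset.eq_empty_iff_forall_notMem]
                intro z hz
                obtain ⟨hzS, hzM⟩ := Finset.mem_inter.mp hz
                have hzXor : z ∈ X ∨ z ∈ Ps s := by
                  have hsm := L.submod X hXs (Ps s) (hmem s) z
                  by_cases h1 : z ∈ X
                  · exact Or.inl h1
                  · by_cases h2 : z ∈ Ps s
                    · exact Or.inr h2
                    · rw [if_neg h1, if_neg h2, if_pos hzM] at hsm
                      omega
                rcases hzXor with h | h
                · have h2 : z ∈ S ∩ X := Finset.mem_inter.mpr ⟨hzS, h⟩
                  rw [hSX] at h2
                  exact absurd h2 (Finset.notMem_empty _)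
                · have hsing : S ∩ Ps s = {es s} := hSsing s (es s) hyS (hG1 s)
                  have h2 : z ∈ S ∩ Ps s := Finset.mem_inter.mpr ⟨hzS, h⟩
                  rw [hsing, Finset.mem_singleton] at h2
                  rw [h2] at hzM
                  exact hynM hzM
              have hsc1 : (⟨(c : ℕ) + 1, hc1lt⟩ : Fin m) ≤ ⟨(c : ℕ) + 1, hc1lt⟩ := le_refl _
              have hslec1 : s ≤ (⟨(c : ℕ) + 1, hc1lt⟩ : Fin m) := by
                have h1 : (s : ℕ) ≤ (c : ℕ) := hsc
                exact Fin.le_def.mpr (by simp; omega)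
              refine ihd ((s : ℕ) + 1) (L.meet X (Ps s)) hMs
                (L.le_trans (L.meet X (Ps s)) hMs X hXs P hPs
                  (L.meet_le_left X hXs (Ps s) (hmem s)) hXP)
                (L.le_meet X hXs (Ps s) (hmem s) (Ps ⟨(c : ℕ) + 1, hc1lt⟩) (hmem _)
                  hc1X (hchain s _ hslec1))
                hSM (fun j hj => by have h1 : s < j := hMbound j hj; have h2 : (s:ℕ) < (j:ℕ) := h1; omega)
                ?_
              have h1 : k ≤ (i : ℕ) := hbound i hiX
              have h2 : (i : ℕ) < (s : ℕ) := his
              omega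
            · -- E1 branch: c < s
              push_neg at hsc
              have hsc1 : (⟨(c : ℕ) + 1, hc1lt⟩ : Fin m) ≤ s := by
                have h1 : (c : ℕ) < (s : ℕ) := hsc
                exact Fin.le_def.mpr (by simp; omega)
              have hlePsX : L.le (Ps s) X :=
                L.le_trans (Ps s) (hmem s) (Ps ⟨(c : ℕ) + 1, hc1lt⟩) (hmem _) X hXs
                  (hchain _ s hsc1) hc1X
              by_cases h1 : Ps s = X
              · exact hynX (by rw [← h1]; exact hG1 s)
              by_cases h2 : X = Ps i
              · exact hynX (by rw [h2]; exact hyK)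
              exact hynX (hcs (Ps s) X (Ps i) (hmem s) hXs (hmem i) hlePsX h1 hleXK h2
                (es s) (hG1 s) hyK)
        exact AUXB (m + 1) 0 P hPs (L.le_refl P hPs) hc1P hSP (fun j _ => Nat.zero_le _)
          (by omega)
      · -- CASE A: join ascent
        have hJs : L.join P (Ps b) ∈ L.sets := L.join_mem P hPs (Ps b) (hmem b)
        have hMs : L.meet P (Ps b) ∈ L.sets := L.meet_mem P hPs (Ps b) (hmem b)
        have hJneP : L.join P (Ps b) ≠ P := by
          intro h
          apply hAB
          have h2 := L.right_le_join P hPs (Ps b) (hmem b)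
          rwa [h] at h2
        have hMnePsb : L.meet P (Ps b) ≠ Ps b := by
          intro h
          apply hAB
          have h2 := L.meet_le_left P hPs (Ps b) (hmem b)
          rwa [h] at h2
        have hA1mem : ∀ x, x ∈ L.meet P (Ps b) → x ∈ P → 0 < ρ x → x ∈ Ps b := by
          intro x hxM hxP hρx
          by_cases hxK : x ∈ Ps i0
          · exact hcs (L.meet P (Ps b)) (Ps b) (Ps i0) hMs (hmem b) (hmem i0)
              (L.meet_le_right P hPs (Ps b) (hmem b)) hMnePsb
              (hchain i0 b (le_of_lt hi0b)) (Ne.symm (hPsne i0 b hi0b)) x hxM hxK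
          · obtain ⟨d, rfl⟩ := hidx x hρx
            rcases lt_or_eq_of_le (hbmax d hxP hxK hρx) with h | h
            · exact hcs (L.meet P (Ps b)) (Ps b) (Ps d) hMs (hmem b) (hmem d)
                (L.meet_le_right P hPs (Ps b) (hmem b)) hMnePsb
                (hchain d b (le_of_lt h)) (Ne.symm (hPsne d b h)) (es d) hxM (hG1 d)
            · rw [h]; exact hG1 b
        have hup := hsup P hPs (Ps b) (hmem b)
        have hA2 := sdiff_pair_bound L ρ hY.1 hPs (hmem b) P
        rw [Finset.sdiff_self, Finset.sum_empty] at hA2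
        have hsplitb : ∑ e ∈ Ps b ∩ P, ρ e + ∑ e ∈ Ps b \ P, ρ e = ∑ e ∈ Ps b, ρ e :=
          Finset.sum_inter_add_sum_sdiff _ _ _
        have hsplitM : ∑ e ∈ L.meet P (Ps b) ∩ P, ρ e + ∑ e ∈ L.meet P (Ps b) \ P, ρ e =
            ∑ e ∈ L.meet P (Ps b), ρ e := Finset.sum_inter_add_sum_sdiff _ _ _
        have hπM : π (L.meet P (Ps b)) ≤ ∑ e ∈ L.meet P (Ps b), ρ e := hY.2 _ hMs
        have hA1 : ∑ e ∈ L.meet P (Ps b) ∩ P, ρ e ≤ ∑ e ∈ Ps b ∩ P, ρ e := by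
          have hz : ∑ e ∈ (L.meet P (Ps b) ∩ P) \ Ps b, ρ e = 0 := by
            apply Finset.sum_eq_zero
            intro e he
            obtain ⟨heMP, heB⟩ := Finset.mem_sdiff.mp he
            obtain ⟨heM, heP⟩ := Finset.mem_inter.mp heMP
            by_contra h
            exact heB (hA1mem e heM heP (lt_of_le_of_ne (hY.1 e) (Ne.symm h)))
          have hsp : ∑ e ∈ (L.meet P (Ps b) ∩ P) ∩ Ps b, ρ e +
              ∑ e ∈ (L.meet P (Ps b) ∩ P) \ Ps b, ρ e = ∑ e ∈ L.meet P (Ps b) ∩ P, ρ e :=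
            Finset.sum_inter_add_sum_sdiff _ _ _
          have hsub : (L.meet P (Ps b) ∩ P) ∩ Ps b ⊆ Ps b ∩ P := by
            intro e he
            simp only [Finset.mem_inter] at he ⊢
            exact ⟨he.2, he.1.2⟩
          have h3 := Finset.sum_le_sum_of_subset_of_nonneg hsub (fun i _ _ => hY.1 i)
          linarith
        have htb := htightPs b
        have hdomJ : π P ≤ π (L.join P (Ps b)) - ∑ e ∈ L.join P (Ps b) \ P, ρ e := by
          linarith
        have hmonoPJ : π P ≤ π (L.join P (Ps b)) :=
          hmono P hPs _ hJs (L.left_le_join P hPs (Ps b) (hmem b))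
        rcases lt_or_eq_of_le hmonoPJ with hlt | heq
        · exact hnd (L.join P (Ps b)) (Finset.mem_filter.mpr ⟨hJs, lt_trans hπP hlt⟩)
            hJneP (Or.inr ⟨hlt, hdomJ⟩)
        · have hJ0 : ∑ e ∈ L.join P (Ps b) \ P, ρ e = 0 := by
            have h1 : 0 ≤ ∑ e ∈ L.join P (Ps b) \ P, ρ e :=
              Finset.sum_nonneg (fun i _ => hY.1 i)
            linarith [hdomJ, heq.le, heq.ge]
          have hallz : ∀ e ∈ L.join P (Ps b) \ P, ρ e = 0 :=
            (Finset.sum_eq_zero_iff_of_nonneg (fun i _ => hY.1 i)).mp hJ0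
          have hSJ : S ∩ L.join P (Ps b) = ∅ := by
            rw [Finset.eq_empty_iff_forall_notMem]
            intro z hz
            obtain ⟨hzS, hzJ⟩ := Finset.mem_inter.mp hz
            have hzpos := hSpos z hzS
            have hznP : z ∉ P := by
              intro h
              have h2 : z ∈ S ∩ P := Finset.mem_inter.mpr ⟨hzS, h⟩
              rw [hSP] at h2
              exact absurd h2 (Finset.notMem_empty _)
            have h3 : ρ z = 0 := hallz z (Finset.mem_sdiff.mpr ⟨hzJ, hznP⟩)
            linarith
          have hndJ : ∀ Q ∈ L.sets.filter (fun Q => 0 < π Q), Q ≠ L.join P (Ps b) →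
              ¬ Dominates π ρ (L.join P (Ps b)) Q := by
            intro Q hQf hQJ hdom
            rcases hdom with h | ⟨h1, h2⟩
            · exact hQJ h.symm
            · have hQneP : Q ≠ P := by
                intro h
                rw [h] at h1
                rw [heq] at h1
                exact absurd h1 (lt_irrefl _)
              apply hnd Q hQf hQneP
              refine Or.inr ⟨by rw [heq]; exact h1, ?_⟩
              have hsub2 : Q \ P ⊆ (Q \ L.join P (Ps b)) ∪ (L.join P (Ps b) \ P) := by
                intro e he
                obtain ⟨heQ, henP⟩ := Finset.mem_sdiff.mp he
                by_cases hJ2 : e ∈ L.join P (Ps b)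
                · exact Finset.mem_union_right _ (Finset.mem_sdiff.mpr ⟨hJ2, henP⟩)
                · exact Finset.mem_union_left _ (Finset.mem_sdiff.mpr ⟨heQ, hJ2⟩)
              have hb1 : ∑ e ∈ Q \ P, ρ e ≤
                  ∑ e ∈ (Q \ L.join P (Ps b)) ∪ (L.join P (Ps b) \ P), ρ e :=
                Finset.sum_le_sum_of_subset_of_nonneg hsub2 (fun i _ _ => hY.1 i)
              have hb2 := Finset.sum_union_inter (s₁ := Q \ L.join P (Ps b))
                (s₂ := L.join P (Ps b) \ P) (f := ρ)
              have hb3 : 0 ≤ ∑ e ∈ (Q \ L.join P (Ps b)) ∩ (L.join P (Ps b) \ P), ρ e :=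
                Finset.sum_nonneg (fun i _ => hY.1 i)
              rw [heq]
              linarith
          have hcard2 : (L.sets.filter fun X => L.le (L.join P (Ps b)) X).card ≤ n := by
            have hsub4 : L.sets.filter (fun X => L.le (L.join P (Ps b)) X) ⊆
                L.sets.filter (fun X => L.le P X) := by
              intro X hX
              obtain ⟨hXs2, hXle⟩ := Finset.mem_filter.mp hX
              exact Finset.mem_filter.mpr ⟨hXs2, L.le_trans P hPs (L.join P (Ps b)) hJs X hXs2
                (L.left_le_join P hPs (Ps b) (hmem b)) hXle⟩
            have hPin : P ∈ L.sets.filter (fun X => L.le P X) :=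
              Finset.mem_filter.mpr ⟨hPs, L.le_refl P hPs⟩
            have hPnotin : P ∉ L.sets.filter (fun X => L.le (L.join P (Ps b)) X) := by
              intro h
              exact hJneP (L.le_antisymm _ hJs P hPs (Finset.mem_filter.mp h).2
                (L.left_le_join P hPs (Ps b) (hmem b)))
            have hss := (Finset.ssubset_iff_of_subset hsub4).mpr ⟨P, hPin, hPnotin⟩
            have := Finset.card_lt_card hss
            omega
          exact ih (L.join P (Ps b)) hcard2 hJs (by rw [← heq]; exact hπP) hSJ hndJ
  intro P hnd
  by_contra hcon
  push_neg at hcon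
  have hSP : S ∩ P = ∅ := Finset.card_eq_zero.mp (by omega)
  obtain ⟨hPf, hnd2⟩ := hnd
  obtain ⟨hPs, hπP⟩ := Finset.mem_filter.mp hPf
  exact MAIN _ P le_rfl hPs hπP hSP hnd2

/-- If `S` fulfils (good-S) for a greedy support of `ρ ∈ Y⁺`, then `S` is an admissible support
candidate for `π` and `ρ`. -/
theorem lattice_goodS_isASC (L : SubmodConsecLattice α) (π : Finset α → ℝ)
    (hπ1 : ∀ P ∈ L.sets, π P ≤ 1)
    (hsup : ∀ P ∈ L.sets, ∀ Q ∈ L.sets, π P + π Q ≤ π (L.join P Q) + π (L.meet P Q))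
    (hmono : ∀ P ∈ L.sets, ∀ Q ∈ L.sets, L.le P Q → π P ≤ π Q)
    (ρ : α → ℝ) (hY : MemYplus L.sets π ρ)
    (m : ℕ) (es : Fin m → α) (Ps : Fin m → Finset α)
    (hgs : IsGreedySupport L.sets L.le π ρ m es Ps)
    (S : Finset α) (hS : GoodS ρ Ps S) :
    IsASC L.sets π ρ S := by
  exact ⟨hS.1, S2_lemma L π hsup hmono ρ hY es Ps hgs S hS,
    S3_lemma L π hsup hmono ρ hY es Ps hgs S hS⟩
end

section
/- Let E be a finite ground set, (𝒫,⪯) a submodular, consecutive lattice of subsets of E, and π : 𝒫 → (−∞,1] monotone and supermodular w.r.t. the lattice. Let ρ ∈ Y⁺ admit a greedy support e_1,…,e_m, P_1,…,P_m, and let S ⊆ E fulfil condition (good-S) for this greedy support. Then |Q ∩ S| ≤ 1 for all Q ∈ 𝒫^=_{π,ρ}. -/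
open Finset

variable {α : Type*} [Fintype α] [DecidableEq α]

private lemma ite_sum_both {a b : Prop} [Decidable a] [Decidable b] {r : ℝ} (hr : 0 < r)
    (h : (if a then r else 0) + (if b then r else 0) = r + r) : a ∧ b := by
  by_cases ha : a <;> by_cases hb : b <;> simp [ha, hb] at h <;> first
    | exact ⟨ha, hb⟩ | linarith

private lemma ite_sum_one {a b : Prop} [Decidable a] [Decidable b] {r : ℝ} (hr : 0 < r)
    (h : (if a then r else 0) + (if b then r else 0) = r) : (a ∧ ¬b) ∨ (¬a ∧ b) := by
  by_cases ha : a <;> by_cases hb : b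
  · rw [if_pos ha, if_pos hb] at h; linarith
  · exact Or.inl ⟨ha, hb⟩
  · exact Or.inr ⟨ha, hb⟩
  · rw [if_neg ha, if_neg hb] at h; linarith

/-- Uncrossing: tight sets are closed under join and meet, and the submodular indicator
inequality is an equality at every element of positive `ρ`-value. -/
private lemma uncross_tight (L : SubmodConsecLattice α) (π : Finset α → ℝ)
    (hsup : ∀ P ∈ L.sets, ∀ Q ∈ L.sets, π P + π Q ≤ π (L.join P Q) + π (L.meet P Q))
    (ρ : α → ℝ) (hρ0 : ∀ e, 0 ≤ ρ e) (hYge : ∀ P ∈ L.sets, π P ≤ ∑ e ∈ P, ρ e)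
    {A B : Finset α} (hA : A ∈ L.sets) (hB : B ∈ L.sets)
    (htA : ∑ e ∈ A, ρ e = π A) (htB : ∑ e ∈ B, ρ e = π B) :
    (∑ e ∈ L.join A B, ρ e = π (L.join A B)) ∧
    (∑ e ∈ L.meet A B, ρ e = π (L.meet A B)) ∧
    ∀ e, 0 < ρ e →
      (if e ∈ L.join A B then ρ e else 0) + (if e ∈ L.meet A B then ρ e else 0) =
      (if e ∈ A then ρ e else 0) + (if e ∈ B then ρ e else 0) := by
  classical
  have hptw : ∀ e, (if e ∈ L.join A B then ρ e else 0) + (if e ∈ L.meet A B then ρ e else 0) ≤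
      (if e ∈ A then ρ e else 0) + (if e ∈ B then ρ e else 0) := by
    intro e
    have h := L.submod A hA B hB e
    have h0 := hρ0 e
    split_ifs at h ⊢ <;> first | linarith | (exfalso; omega)
  have hsum : ∀ C : Finset α, ∑ e ∈ C, ρ e = ∑ e ∈ (univ : Finset α),
      (if e ∈ C then ρ e else 0) := by
    intro C; rw [Finset.sum_ite_mem, Finset.univ_inter]
  have hle : (∑ e ∈ L.join A B, ρ e) + (∑ e ∈ L.meet A B, ρ e) ≤
      (∑ e ∈ A, ρ e) + (∑ e ∈ B, ρ e) := by
    rw [hsum (L.join A B), hsum (L.meet A B), hsum A, hsum B, ← Finset.sum_add_distrib,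
      ← Finset.sum_add_distrib]
    exact Finset.sum_le_sum fun e _ => hptw e
  have h1 := hsup A hA B hB
  have h2 := hYge _ (L.join_mem A hA B hB)
  have h3 := hYge _ (L.meet_mem A hA B hB)
  have hJt : ∑ e ∈ L.join A B, ρ e = π (L.join A B) := by linarith
  have hMt : ∑ e ∈ L.meet A B, ρ e = π (L.meet A B) := by linarith
  refine ⟨hJt, hMt, ?_⟩
  have htotal : ∑ e ∈ (univ : Finset α),
      (((if e ∈ A then ρ e else 0) + (if e ∈ B then ρ e else 0)) -
       ((if e ∈ L.join A B then ρ e else 0) + (if e ∈ L.meet A B then ρ e else 0))) = 0 := by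
    rw [Finset.sum_sub_distrib, Finset.sum_add_distrib, Finset.sum_add_distrib,
      ← hsum, ← hsum, ← hsum, ← hsum]
    linarith
  have hzero := (Finset.sum_eq_zero_iff_of_nonneg
    (fun e _ => sub_nonneg.mpr (hptw e))).mp htotal
  intro e _
  have := hzero e (Finset.mem_univ e)
  linarith

/-- If `S` fulfils (good-S) for a greedy support of `ρ ∈ Y⁺`, then `|Q ∩ S| ≤ 1` for every
tight set `Q ∈ PP^=_{π,ρ}`. -/
theorem lattice_goodS_tight_sets (L : SubmodConsecLattice α) (π : Finset α → ℝ)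
    (hπ1 : ∀ P ∈ L.sets, π P ≤ 1)
    (hsup : ∀ P ∈ L.sets, ∀ Q ∈ L.sets, π P + π Q ≤ π (L.join P Q) + π (L.meet P Q))
    (hmono : ∀ P ∈ L.sets, ∀ Q ∈ L.sets, L.le P Q → π P ≤ π Q)
    (ρ : α → ℝ) (hY : MemYplus L.sets π ρ)
    (m : ℕ) (es : Fin m → α) (Ps : Fin m → Finset α)
    (hgs : IsGreedySupport L.sets L.le π ρ m es Ps)
    (S : Finset α) (hS : GoodS ρ Ps S) :
    ∀ Q ∈ L.sets, ∑ e ∈ Q, ρ e = π Q → (Q ∩ S).card ≤ 1 := by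
  classical
  obtain ⟨hρ0, hYge⟩ := hY
  obtain ⟨hG1, hG2, _hG3, _hG3', ⟨hρP, hρnull⟩, _huniq⟩ := hgs
  obtain ⟨hSpos, hScard⟩ := hS
  -- the unique element of `S ∩ Ps i`
  have hσex : ∀ i : Fin m, ∃ a, S ∩ Ps i = {a} := fun i => Finset.card_eq_one.mp (hScard i)
  choose σ hσ using hσex
  have hσS : ∀ i, σ i ∈ S := fun i =>
    (Finset.mem_inter.mp (by rw [hσ i]; exact Finset.mem_singleton_self _)).1
  have hσP : ∀ i, σ i ∈ Ps i := fun i =>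
    (Finset.mem_inter.mp (by rw [hσ i]; exact Finset.mem_singleton_self _)).2
  have hσuniq : ∀ i, ∀ x ∈ S, x ∈ Ps i → x = σ i := by
    intro i x hxS hxP
    have hx : x ∈ S ∩ Ps i := Finset.mem_inter.mpr ⟨hxS, hxP⟩
    rw [hσ i] at hx; exact Finset.mem_singleton.mp hx
  have hσpos : ∀ i, 0 < ρ (σ i) := fun i => hSpos _ (hσS i)
  have hPmem : ∀ i, Ps i ∈ L.sets := fun i => (hG2 i).1
  have hesnot : ∀ i j : Fin m, (j : ℕ) < (i : ℕ) → es j ∉ Ps i := fun i j h =>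
    (hG2 i).2.1 j (Fin.lt_def.mpr h)
  have hchain : ∀ i j : Fin m, (i : ℕ) ≤ (j : ℕ) → L.le (Ps j) (Ps i) := by
    intro i j hij
    exact (hG2 i).2.2 (Ps j) (hPmem j) (fun l hl =>
      hesnot j l (by rw [Fin.lt_def] at hl; omega))
  have hsupp : ∀ e, 0 < ρ e → ∃ l, es l = e := by
    intro e he
    by_contra hc; push_neg at hc
    have := hρnull e (fun l h => hc l h.symm)
    linarith
  intro Q hQ hQt
  by_contra hcard
  push_neg at hcard
  obtain ⟨s₀, hs₀, s₀', hs₀', hne₀⟩ := Finset.one_lt_card.mp hcard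
  have hidx : ∀ x ∈ Q ∩ S, ∃ i : Fin m, σ i = x := by
    intro x hx
    have hxS := (Finset.mem_inter.mp hx).2
    obtain ⟨l, hl⟩ := hsupp x (hSpos x hxS)
    exact ⟨l, (hσuniq l x hxS (hl ▸ hG1 l)).symm⟩
  obtain ⟨i₀, hi₀⟩ := hidx s₀ hs₀
  obtain ⟨j₀, hj₀⟩ := hidx s₀' hs₀'
  have hexBad : ∃ g : ℕ, ∃ i j : Fin m, (i : ℕ) < (j : ℕ) ∧ (j : ℕ) - (i : ℕ) = g ∧
      ∃ A, A ∈ L.sets ∧ (∑ e ∈ A, ρ e = π A) ∧ σ i ∈ A ∧ σ j ∈ A ∧ σ i ≠ σ j := by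
    have hvne : (i₀ : ℕ) ≠ (j₀ : ℕ) := by
      intro h; exact hne₀ (by rw [← hi₀, ← hj₀]; congr 1; exact Fin.ext h)
    rcases lt_or_gt_of_ne hvne with h | h
    · exact ⟨_, i₀, j₀, h, rfl, Q, hQ, hQt, hi₀ ▸ (Finset.mem_inter.mp hs₀).1,
        hj₀ ▸ (Finset.mem_inter.mp hs₀').1, by rw [hi₀, hj₀]; exact hne₀⟩
    · exact ⟨_, j₀, i₀, h, rfl, Q, hQ, hQt, hj₀ ▸ (Finset.mem_inter.mp hs₀').1,
        hi₀ ▸ (Finset.mem_inter.mp hs₀).1, by rw [hi₀, hj₀]; exact (Ne.symm hne₀)⟩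
  obtain ⟨i, j, hij, hgap, A, hAmem, hAt, hsA, hs'A, hss'⟩ := Nat.find_spec hexBad
  have hmin : ∀ g' < Nat.find hexBad,
      ¬ ∃ i j : Fin m, (i : ℕ) < (j : ℕ) ∧ (j : ℕ) - (i : ℕ) = g' ∧
      ∃ A, A ∈ L.sets ∧ (∑ e ∈ A, ρ e = π A) ∧ σ i ∈ A ∧ σ j ∈ A ∧ σ i ≠ σ j :=
    fun g' h => Nat.find_min hexBad h
  have hsnotPj : σ i ∉ Ps j := fun h => hss' (hσuniq j _ (hσS i) h)
  have hs'notPi : σ j ∉ Ps i := fun h => hss' ((hσuniq i _ (hσS j) h).symm)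
  have hPjPi : L.le (Ps j) (Ps i) := hchain i j (le_of_lt hij)
  have hPjnePi : Ps j ≠ Ps i := fun h => hs'notPi (h ▸ hσP j)
  -- Step 1: meet A with Ps i
  obtain ⟨hWt, hM₁t, hpt₁⟩ := uncross_tight L π hsup ρ hρ0 hYge hAmem (hPmem i) hAt (hρP i)
  have hM₁mem : L.meet A (Ps i) ∈ L.sets := L.meet_mem A hAmem _ (hPmem i)
  have hWmem : L.join A (Ps i) ∈ L.sets := L.join_mem A hAmem _ (hPmem i)
  have hsM₁ : σ i ∈ L.meet A (Ps i) := by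
    have h := hpt₁ (σ i) (hσpos i)
    rw [if_pos hsA, if_pos (hσP i)] at h
    exact (ite_sum_both (hσpos i) h).2
  have hs'M₁ : σ j ∈ L.meet A (Ps i) := by
    have h := hpt₁ (σ j) (hσpos j)
    rw [if_pos hs'A, if_neg hs'notPi, add_zero] at h
    rcases ite_sum_one (hσpos j) h with ⟨hW', _⟩ | ⟨_, hM'⟩
    · exfalso
      have hPiW : L.le (Ps i) (L.join A (Ps i)) := L.right_le_join A hAmem _ (hPmem i)
      have hPineW : Ps i ≠ L.join A (Ps i) := fun h' => hs'notPi (by rw [h']; exact hW')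
      have hcs := L.consec (Ps j) (hPmem j) (Ps i) (hPmem i) _ hWmem hPjPi hPjnePi hPiW hPineW
      exact hs'notPi (hcs (Finset.mem_inter.mpr ⟨hσP j, hW'⟩))
    · exact hM'
  have hM₁lePi : L.le (L.meet A (Ps i)) (Ps i) := L.meet_le_right A hAmem _ (hPmem i)
  -- Step 2: join (meet A (Ps i)) with Ps j
  obtain ⟨hJt, hYt, hpt₂⟩ :=
    uncross_tight L π hsup ρ hρ0 hYge hM₁mem (hPmem j) hM₁t (hρP j)
  have hJmem : L.join (L.meet A (Ps i)) (Ps j) ∈ L.sets := L.join_mem _ hM₁mem _ (hPmem j)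
  have hYmem : L.meet (L.meet A (Ps i)) (Ps j) ∈ L.sets := L.meet_mem _ hM₁mem _ (hPmem j)
  set J := L.join (L.meet A (Ps i)) (Ps j) with hJdef
  have hs'J : σ j ∈ J := by
    have h := hpt₂ (σ j) (hσpos j)
    rw [if_pos hs'M₁, if_pos (hσP j)] at h
    exact (ite_sum_both (hσpos j) h).1
  have hsJ : σ i ∈ J := by
    have h := hpt₂ (σ i) (hσpos i)
    rw [if_pos hsM₁, if_neg hsnotPj, add_zero] at h
    rcases ite_sum_one (hσpos i) h with ⟨hJ', _⟩ | ⟨_, hY'⟩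
    · exact hJ'
    · exfalso
      have hYlePj : L.le (L.meet (L.meet A (Ps i)) (Ps j)) (Ps j) :=
        L.meet_le_right _ hM₁mem _ (hPmem j)
      have hYnePj : L.meet (L.meet A (Ps i)) (Ps j) ≠ Ps j := fun h' =>
        hsnotPj (by rw [← h']; exact hY')
      have hcs := L.consec _ hYmem (Ps j) (hPmem j) (Ps i) (hPmem i)
        hYlePj hYnePj hPjPi hPjnePi
      exact hsnotPj (hcs (Finset.mem_inter.mpr ⟨hY', hσP i⟩))
  have hPjJ : L.le (Ps j) J := L.right_le_join _ hM₁mem _ (hPmem j)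
  have hJlePi : L.le J (Ps i) :=
    L.join_le _ hM₁mem _ (hPmem j) _ (hPmem i) hM₁lePi hPjPi
  have hJnePi : J ≠ Ps i := fun h => hs'notPi (h ▸ hs'J)
  have hJnePj : J ≠ Ps j := fun h => hsnotPj (h ▸ hsJ)
  -- Step 3: adjacency of i and j
  have hadj : (j : ℕ) = (i : ℕ) + 1 := by
    by_contra hne
    have hmid : (i : ℕ) + 1 < (j : ℕ) := by omega
    have hrm : (i : ℕ) + 1 < m := lt_trans hmid j.isLt
    set r : Fin m := ⟨(i : ℕ) + 1, hrm⟩ with hrdef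
    have hir : (i : ℕ) < (r : ℕ) := by simp [hrdef]
    have hrj : (r : ℕ) < (j : ℕ) := hmid
    have hsnotPr : σ i ∉ Ps r := by
      intro h
      have heq : σ i = σ r := hσuniq r _ (hσS i) h
      exact hmin ((j : ℕ) - (r : ℕ)) (by omega)
        ⟨r, j, hrj, rfl, J, hJmem, hJt, heq ▸ hsJ, hs'J, heq ▸ hss'⟩
    have hs'notPr : σ j ∉ Ps r := by
      intro h
      have heq : σ j = σ r := hσuniq r _ (hσS j) h
      exact hmin ((r : ℕ) - (i : ℕ)) (by omega)
        ⟨i, r, hir, rfl, J, hJmem, hJt, hsJ, heq ▸ hs'J, fun h' => hss' (h' ▸ heq.symm ▸ rfl)⟩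
    have hσrJ : σ r ∉ J := by
      intro h
      have hner : σ r ≠ σ j := fun h' => hs'notPr (h' ▸ hσP r)
      exact hmin ((j : ℕ) - (r : ℕ)) (by omega)
        ⟨r, j, hrj, rfl, J, hJmem, hJt, h, hs'J, hner⟩
    obtain ⟨hXt, hY't, hpt₃⟩ :=
      uncross_tight L π hsup ρ hρ0 hYge hJmem (hPmem r) hJt (hρP r)
    have hXmem : L.join J (Ps r) ∈ L.sets := L.join_mem _ hJmem _ (hPmem r)
    have hY'mem : L.meet J (Ps r) ∈ L.sets := L.meet_mem _ hJmem _ (hPmem r)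
    have hPrPi : L.le (Ps r) (Ps i) := hchain i r (le_of_lt hir)
    have hPrnePi : Ps r ≠ Ps i := fun h => hsnotPr (h.symm ▸ hσP i)
    have hsX : σ i ∈ L.join J (Ps r) := by
      have h := hpt₃ (σ i) (hσpos i)
      rw [if_pos hsJ, if_neg hsnotPr, add_zero] at h
      rcases ite_sum_one (hσpos i) h with ⟨hX', _⟩ | ⟨_, hY''⟩
      · exact hX'
      · exfalso
        have h1 : L.le (L.meet J (Ps r)) (Ps r) := L.meet_le_right _ hJmem _ (hPmem r)
        have h2 : L.meet J (Ps r) ≠ Ps r := fun h' => hsnotPr (by rw [← h']; exact hY'')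
        have hcs := L.consec _ hY'mem (Ps r) (hPmem r) (Ps i) (hPmem i) h1 h2 hPrPi hPrnePi
        exact hsnotPr (hcs (Finset.mem_inter.mpr ⟨hY'', hσP i⟩))
    have hs'Y' : σ j ∈ L.meet J (Ps r) := by
      have h := hpt₃ (σ j) (hσpos j)
      rw [if_pos hs'J, if_neg hs'notPr, add_zero] at h
      rcases ite_sum_one (hσpos j) h with ⟨hX', _⟩ | ⟨_, hY''⟩
      · exfalso
        have hPjPr : L.le (Ps j) (Ps r) := hchain r j (le_of_lt hrj)
        have hPjnePr : Ps j ≠ Ps r := fun h' => hs'notPr (h' ▸ hσP j)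
        have h1 : L.le (Ps r) (L.join J (Ps r)) := L.right_le_join _ hJmem _ (hPmem r)
        have h2 : Ps r ≠ L.join J (Ps r) := fun h' => hs'notPr (by rw [h']; exact hX')
        have hcs := L.consec (Ps j) (hPmem j) (Ps r) (hPmem r) _ hXmem hPjPr hPjnePr h1 h2
        exact hs'notPr (hcs (Finset.mem_inter.mpr ⟨hσP j, hX'⟩))
      · exact hY''
    have h := hpt₃ (σ r) (hσpos r)
    rw [if_neg hσrJ, if_pos (hσP r), zero_add] at h
    rcases ite_sum_one (hσpos r) h with ⟨hX', _⟩ | ⟨_, hY''⟩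
    · exact hmin ((r : ℕ) - (i : ℕ)) (by omega)
        ⟨i, r, hir, rfl, _, hXmem, hXt, hsX, hX', fun h' => hsnotPr (h' ▸ hσP r)⟩
    · exact hmin ((j : ℕ) - (r : ℕ)) (by omega)
        ⟨r, j, hrj, rfl, _, hY'mem, hY't, hY'', hs'Y', fun h' => hs'notPr (h' ▸ hσP r)⟩
  -- Step 4: es i ∈ J
  have hesiJ : es i ∈ J := by
    have hexn : ∃ n, ∃ h : n < m, n ≤ (i : ℕ) ∧ es ⟨n, h⟩ ∈ J := by
      by_contra hc; push_neg at hc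
      have hJlePj : L.le J (Ps j) := (hG2 j).2.2 J hJmem (fun l hl => by
        have hlj : (l : ℕ) < (j : ℕ) := Fin.lt_def.mp hl
        have := hc (l : ℕ) l.isLt (by omega)
        simpa using this)
      exact hJnePj (L.le_antisymm J hJmem (Ps j) (hPmem j) hJlePj hPjJ)
    obtain ⟨hkm, hki, hkJ⟩ := Nat.find_spec hexn
    set k : ℕ := Nat.find hexn with hkdef
    have hkmin : ∀ l : Fin m, (l : ℕ) < k → es l ∉ J := by
      intro l hl hmem
      exact Nat.find_min hexn hl ⟨l.isLt, by omega, by simpa using hmem⟩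
    have hJlePk : L.le J (Ps ⟨k, hkm⟩) := (hG2 ⟨k, hkm⟩).2.2 J hJmem
      (fun l hl => hkmin l (Fin.lt_def.mp hl))
    by_cases hk : k = (i : ℕ)
    · have hfin : (⟨k, hkm⟩ : Fin m) = i := Fin.ext hk
      rw [hfin] at hkJ; exact hkJ
    · exfalso
      have hklt : k < (i : ℕ) := by omega
      have hPiPk : L.le (Ps i) (Ps ⟨k, hkm⟩) := hchain ⟨k, hkm⟩ i (le_of_lt hklt)
      have hkni : es ⟨k, hkm⟩ ∉ Ps i := hesnot i ⟨k, hkm⟩ hklt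
      have hPinePk : Ps i ≠ Ps ⟨k, hkm⟩ := fun h =>
        hkni (by rw [h]; exact hG1 _)
      have hcs := L.consec J hJmem (Ps i) (hPmem i) (Ps ⟨k, hkm⟩) (hPmem _)
        hJlePi hJnePi hPiPk hPinePk
      exact hkni (hcs (Finset.mem_inter.mpr ⟨hkJ, hG1 _⟩))
  -- Step 5: every positive-ρ element of Ps i lies in J
  have hsubset : ∀ e ∈ Ps i, 0 < ρ e → e ∈ J := by
    intro e heP heρ
    obtain ⟨l, hl⟩ := hsupp e heρ
    rcases lt_trichotomy ((l : ℕ)) ((i : ℕ)) with h | h | h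
    · exact absurd (hl.symm ▸ heP) (hesnot i l h)
    · have hfin : l = i := Fin.ext h
      rw [← hl, hfin]; exact hesiJ
    · have hjl : (j : ℕ) ≤ (l : ℕ) := by omega
      have hPlJ : L.le (Ps l) J :=
        L.le_trans (Ps l) (hPmem l) (Ps j) (hPmem j) J hJmem (hchain j l hjl) hPjJ
      have hPlneJ : Ps l ≠ J := by
        intro h'
        have h1 : L.le J (Ps j) := h' ▸ (hchain j l hjl)
        exact hJnePj (L.le_antisymm J hJmem (Ps j) (hPmem j) h1 hPjJ)
      have hcs := L.consec (Ps l) (hPmem l) J hJmem (Ps i) (hPmem i)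
        hPlJ hPlneJ hJlePi hJnePi
      exact hcs (Finset.mem_inter.mpr ⟨hl ▸ hG1 l, heP⟩)
  -- Step 6: contradiction with monotonicity
  have hmonoJ : π J ≤ π (Ps i) := hmono J hJmem (Ps i) (hPmem i) hJlePi
  have hPsum : ∑ e ∈ Ps i, ρ e = ∑ e ∈ Ps i ∩ J, ρ e := by
    refine (Finset.sum_subset Finset.inter_subset_left ?_).symm
    intro x hx hnx
    by_contra hne
    have hpos : 0 < ρ x := lt_of_le_of_ne (hρ0 x) (Ne.symm hne)
    exact hnx (Finset.mem_inter.mpr ⟨hx, hsubset x hx hpos⟩)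
  have hlt : ∑ e ∈ Ps i ∩ J, ρ e < ∑ e ∈ J, ρ e :=
    Finset.sum_lt_sum_of_subset Finset.inter_subset_right hs'J
      (fun h => hs'notPi (Finset.mem_inter.mp h).1) (hσpos j) (fun x _ _ => hρ0 x)
  have hPt := hρP i
  linarith
end

section
/- Let E be a finite ground set, (𝒫,⪯) a submodular, consecutive lattice of subsets of E, and π : 𝒫 → (−∞,1] monotone and supermodular w.r.t. the lattice. Let ρ ∈ Y⁺ admit a greedy support e_1,…,e_m, P_1,…,P_m with m ≥ 1, and let S ⊆ E fulfil condition (good-S) for this greedy support. Then Q ∩ S ≠ ∅ for all Q ∈ 𝒫 with Q ⪰ P_m. -/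
open Finset

variable {α : Type*} [Fintype α] [DecidableEq α]

/-- If `S` fulfils (good-S) for a greedy support of `ρ ∈ Y⁺` with `m ≥ 1`, then `Q ∩ S ≠ ∅` for
all `Q ∈ PP` with `Q ⪰ P_m`. -/
theorem lattice_goodS_above_Pm (L : SubmodConsecLattice α) (π : Finset α → ℝ)
    (hπ1 : ∀ P ∈ L.sets, π P ≤ 1)
    (hsup : ∀ P ∈ L.sets, ∀ Q ∈ L.sets, π P + π Q ≤ π (L.join P Q) + π (L.meet P Q))
    (hmono : ∀ P ∈ L.sets, ∀ Q ∈ L.sets, L.le P Q → π P ≤ π Q)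
    (ρ : α → ℝ) (hY : MemYplus L.sets π ρ)
    (m : ℕ) (hm : 0 < m) (es : Fin m → α) (Ps : Fin m → Finset α)
    (hgs : IsGreedySupport L.sets L.le π ρ m es Ps)
    (S : Finset α) (hS : GoodS ρ Ps S) :
    ∀ Q ∈ L.sets, L.le (Ps ⟨m - 1, Nat.sub_lt hm Nat.one_pos⟩) Q → (Q ∩ S).Nonempty := by
  classical
  obtain ⟨hG1, hG2, hG3a, hG3b, ⟨hsol, hzero⟩, huniq⟩ := hgs
  obtain ⟨hSpos, hScard⟩ := hS
  set idx : Fin m := ⟨m - 1, Nat.sub_lt hm Nat.one_pos⟩ with hidx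
  suffices H : ∀ n : ℕ, ∀ Q ∈ L.sets,
      (L.sets.filter (fun R => L.le R Q)).card ≤ n →
      L.le (Ps idx) Q → (Q ∩ S).Nonempty by
    intro Q hQ hle
    exact H _ Q hQ le_rfl hle
  intro n
  induction n with
  | zero =>
    intro Q hQ hcard hle
    exfalso
    have hQin : Q ∈ L.sets.filter (fun R => L.le R Q) :=
      Finset.mem_filter.2 ⟨hQ, L.le_refl Q hQ⟩
    have := Finset.card_pos.2 ⟨Q, hQin⟩
    omega
  | succ n ih =>
    intro Q hQ hcard hle
    -- π Q > 0, so Q contains some es i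
    have hπQ : 0 < π Q :=
      lt_of_lt_of_le (hG3a idx) (hmono _ (hG2 idx).1 Q hQ hle)
    have hex : ∃ i, es i ∈ Q := by
      by_contra h
      push_neg at h
      exact absurd (hG3b Q hQ h) (not_le.2 hπQ)
    -- minimal index t with es t ∈ Q
    set T : Finset (Fin m) := Finset.univ.filter (fun i => es i ∈ Q) with hT
    have hTne : T.Nonempty := by
      obtain ⟨i, hi⟩ := hex
      exact ⟨i, Finset.mem_filter.2 ⟨Finset.mem_univ _, hi⟩⟩
    set t : Fin m := T.min' hTne with ht
    have htQ : es t ∈ Q := (Finset.mem_filter.1 (T.min'_mem hTne)).2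
    have htmin : ∀ i, i < t → es i ∉ Q := by
      intro i hi hiQ
      exact absurd (T.min'_le i (Finset.mem_filter.2 ⟨Finset.mem_univ _, hiQ⟩))
        (not_le.2 hi)
    have hQPt : L.le Q (Ps t) := (hG2 t).2.2 Q hQ htmin
    -- the unique element s of S ∩ Ps t
    obtain ⟨s, hs⟩ := Finset.card_eq_one.mp (hScard t)
    have hsmem : s ∈ S ∩ Ps t := by rw [hs]; exact Finset.mem_singleton_self s
    have hsS : s ∈ S := (Finset.mem_inter.1 hsmem).1
    have hsPt : s ∈ Ps t := (Finset.mem_inter.1 hsmem).2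
    have hsρ : 0 < ρ s := hSpos s hsS
    have hjex : ∃ i, s = es i := by
      by_contra h
      push_neg at h
      exact absurd (hzero s h) (ne_of_gt hsρ)
    obtain ⟨j, hj⟩ := hjex
    have htj : t ≤ j := by
      by_contra h
      push_neg at h
      exact (hG2 t).2.1 j h (hj ▸ hsPt)
    by_cases hsQ : s ∈ Q
    · exact ⟨s, Finset.mem_inter.2 ⟨hsQ, hsS⟩⟩
    by_cases hjt : j = t
    · exact absurd (hj ▸ (hjt ▸ htQ : es j ∈ Q)) hsQ
    have htj' : t < j := lt_of_le_of_ne htj (Ne.symm hjt)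
    have hPjmem : Ps j ∈ L.sets := (hG2 j).1
    have hPtmem : Ps t ∈ L.sets := (hG2 t).1
    have hsPj : s ∈ Ps j := hj ▸ hG1 j
    have hPjPt : L.le (Ps j) (Ps t) :=
      (hG2 t).2.2 _ hPjmem (fun i hi => (hG2 j).2.1 i (lt_trans hi htj'))
    have hPjPt_ne : Ps j ≠ Ps t := by
      intro h
      exact (hG2 j).2.1 t htj' (h ▸ hG1 t)
    -- Q is not below Ps j
    have hnQPj : ¬ L.le Q (Ps j) := by
      intro hQPj
      have hQne : Q ≠ Ps j := fun h => hsQ (h ▸ hsPj)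
      have hcons := L.consec Q hQ (Ps j) hPjmem (Ps t) hPtmem hQPj hQne hPjPt hPjPt_ne
      exact (hG2 j).2.1 t htj' (hcons (Finset.mem_inter.2 ⟨htQ, hG1 t⟩))
    set A : Finset α := L.meet Q (Ps j) with hA
    set B : Finset α := L.join Q (Ps j) with hB
    have hAmem : A ∈ L.sets := L.meet_mem Q hQ (Ps j) hPjmem
    have hBmem : B ∈ L.sets := L.join_mem Q hQ (Ps j) hPjmem
    -- s ∈ B
    have hsB : s ∈ B := by
      by_cases hBPt : B = Ps t
      · rw [hBPt]; exact hsPt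
      have hPjB : L.le (Ps j) B := L.right_le_join Q hQ (Ps j) hPjmem
      have hBne : Ps j ≠ B := by
        intro h
        exact hnQPj (h ▸ L.left_le_join Q hQ (Ps j) hPjmem)
      have hBPt_le : L.le B (Ps t) :=
        L.join_le Q hQ (Ps j) hPjmem (Ps t) hPtmem hQPt hPjPt
      exact L.consec (Ps j) hPjmem B hBmem (Ps t) hPtmem hPjB hBne hBPt_le hBPt
        (Finset.mem_inter.2 ⟨hsPj, hsPt⟩)
    -- s ∉ A by submodularity
    have hsA : s ∉ A := by
      intro hsA
      have hsm := L.submod Q hQ (Ps j) hPjmem s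
      rw [← hB, ← hA] at hsm
      simp only [if_pos hsB, if_pos hsA, if_neg hsQ, if_pos hsPj] at hsm
      omega
    have hAQ : L.le A Q := L.meet_le_left Q hQ (Ps j) hPjmem
    have hAne : A ≠ Q := by
      intro h
      exact hnQPj (h ▸ L.meet_le_right Q hQ (Ps j) hPjmem)
    -- Ps idx ⪯ A
    have hPmPj : L.le (Ps idx) (Ps j) := by
      refine (hG2 j).2.2 _ (hG2 idx).1 (fun i hi => (hG2 idx).2.1 i ?_)
      have h1 : (i : ℕ) < (j : ℕ) := hi
      have h2 : (j : ℕ) < m := j.2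
      have : (i : ℕ) < m - 1 := by omega
      exact this
    have hPmA : L.le (Ps idx) A :=
      L.le_meet Q hQ (Ps j) hPjmem (Ps idx) (hG2 idx).1 hle hPmPj
    -- measure decreases
    have hsub : L.sets.filter (fun R => L.le R A) ⊆ L.sets.filter (fun R => L.le R Q) := by
      intro R hR
      have hR' := Finset.mem_filter.1 hR
      exact Finset.mem_filter.2 ⟨hR'.1, L.le_trans R hR'.1 A hAmem Q hQ hR'.2 hAQ⟩
    have hQnotin : Q ∉ L.sets.filter (fun R => L.le R A) := by
      intro h
      have hQA : L.le Q A := (Finset.mem_filter.1 h).2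
      exact hAne (L.le_antisymm A hAmem Q hQ hAQ hQA)
    have hQin : Q ∈ L.sets.filter (fun R => L.le R Q) :=
      Finset.mem_filter.2 ⟨hQ, L.le_refl Q hQ⟩
    have hlt : (L.sets.filter (fun R => L.le R A)).card <
        (L.sets.filter (fun R => L.le R Q)).card :=
      Finset.card_lt_card ((Finset.ssubset_iff_of_subset hsub).2 ⟨Q, hQin, hQnotin⟩)
    obtain ⟨x, hx⟩ := ih A hAmem (by omega) hPmA
    have hxA : x ∈ A := (Finset.mem_inter.1 hx).1
    have hxS : x ∈ S := (Finset.mem_inter.1 hx).2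
    have hxm := L.submod Q hQ (Ps j) hPjmem x
    rw [← hB, ← hA] at hxm
    by_cases hxQ : x ∈ Q
    · exact ⟨x, Finset.mem_inter.2 ⟨hxQ, hxS⟩⟩
    exfalso
    have hxPj : x ∈ Ps j := by
      by_contra hxPj
      simp only [if_pos hxA, if_neg hxQ, if_neg hxPj] at hxm
      omega
    -- then x and s are both in S ∩ Ps j, which has one element
    have hsinj : s ∈ S ∩ Ps j := Finset.mem_inter.2 ⟨hsS, hsPj⟩
    have hxinj : x ∈ S ∩ Ps j := Finset.mem_inter.2 ⟨hxS, hxPj⟩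
    obtain ⟨z, hz⟩ := Finset.card_eq_one.mp (hScard j)
    rw [hz, Finset.mem_singleton] at hsinj hxinj
    have hxs : x = s := by rw [hxinj, hsinj]
    exact hsA (hxs ▸ hxA)
end

section
/- Let E be a finite ground set, (𝒫,⪯) a submodular, consecutive lattice of subsets of E, and π : 𝒫 → (−∞,1] monotone and supermodular w.r.t. the lattice. Let ρ ∈ Y⁺ admit a greedy support e_1,…,e_m, P_1,…,P_m, and let S ⊆ E fulfil condition (good-S) for this greedy support. Then S ∩ Q ≠ ∅ for every Q ∈ 𝒫 with π_Q > 0 that is non-dominated with respect to π and ρ in {Q' ∈ 𝒫 : π_{Q'} > 0}. -/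
open Finset

variable {α : Type*} [Fintype α] [DecidableEq α]

/-!
Induct downwards on the level `k`. A set `Q` of positive requirement that avoids
`e_0, …, e_{k-1}` lies below `P_k`, and the unique `s ∈ S ∩ P_k` either lies in `Q` or is some
`e_b ∉ Q` with `b ≥ k`. In the latter case `M = Q ∧ P_b` avoids `e_0, …, e_b`, and by
supermodularity a set `R` strictly dominating `M` would make `Q ∨ R` strictly dominate `Q`
(with `R = P_b` this also gives `π_M > 0`). So `M` is non-dominated one level above `b` and meets
`S` by induction, in a point of `Q`, because `S ∩ P_b = {e_b}` and `e_b ∉ M`.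
-/

def StrictlyDominates (π : Finset α → ℝ) (ρ : α → ℝ) (P Q : Finset α) : Prop :=
  π P < π Q ∧ π P ≤ π Q - ∑ e ∈ Q \ P, ρ e

/-- `P ⊆ E ∖ {e_0, …, e_{k-1}}`, with `e` indexed from `0`. -/
def Avoids {m : ℕ} (es : Fin m → α) (k : ℕ) (P : Finset α) : Prop :=
  ∀ j : Fin m, (j : ℕ) < k → es j ∉ P

open Classical in
noncomputable def posLevel (PP : Finset (Finset α)) (π : Finset α → ℝ) {m : ℕ} (es : Fin m → α)
    (k : ℕ) : Finset (Finset α) :=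
  PP.filter fun P => 0 < π P ∧ Avoids es k P

section

variable {π : Finset α → ℝ} {ρ : α → ℝ} {m : ℕ} {es : Fin m → α} {P Q R V : Finset α}

omit [Fintype α] in
theorem strictlyDominates_of_supermodular (hsup : π P + π R ≤ π Q + π V) (hVR : π V < π R)
    (hsum : π V + ∑ e ∈ Q \ P, ρ e ≤ π R) : StrictlyDominates π ρ P Q :=
  ⟨by linarith, by linarith⟩

omit [Fintype α] in
theorem NonDominated.not_strictlyDominates {PP' : Finset (Finset α)}
    (h : NonDominated π ρ PP' P) (hQ : Q ∈ PP') : ¬ StrictlyDominates π ρ P Q := by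
  intro hd
  by_cases hQP : Q = P
  · exact lt_irrefl _ (hQP ▸ hd.1)
  · exact h.2 Q hQ hQP (Or.inr hd)

omit [Fintype α] [DecidableEq α] in
theorem Avoids.mono {k l : ℕ} (h : Avoids es k P) (hlk : l ≤ k) : Avoids es l P :=
  fun j hj => h j (lt_of_lt_of_le hj hlk)

omit [Fintype α] [DecidableEq α] in
theorem mem_posLevel {PP : Finset (Finset α)} {k : ℕ} :
    P ∈ posLevel PP π es k ↔ P ∈ PP ∧ 0 < π P ∧ Avoids es k P := by
  simp [posLevel]

omit [Fintype α] [DecidableEq α] in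
theorem posLevel_zero (PP : Finset (Finset α)) :
    posLevel PP π es 0 = PP.filter fun Q => 0 < π Q := by
  ext P
  simp [mem_posLevel, Avoids]

end

namespace SubmodConsecLattice

variable (L : SubmodConsecLattice α) {P Q R : Finset α}

theorem mem_or_mem_of_mem_join (hP : P ∈ L.sets) (hQ : Q ∈ L.sets) {x : α}
    (hx : x ∈ L.join P Q) : x ∈ P ∨ x ∈ Q := by
  by_contra! h
  have := L.submod P hP Q hQ x
  simp [hx, h.1, h.2] at this

theorem mem_or_mem_of_mem_meet (hP : P ∈ L.sets) (hQ : Q ∈ L.sets) {x : α}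
    (hx : x ∈ L.meet P Q) : x ∈ P ∨ x ∈ Q := by
  by_contra! h
  have := L.submod P hP Q hQ x
  simp [hx, h.1, h.2] at this

theorem inter_subset_of_le_of_le (hP : P ∈ L.sets) (hQ : Q ∈ L.sets) (hR : R ∈ L.sets)
    (hPQ : L.le P Q) (hQR : L.le Q R) : P ∩ R ⊆ Q := by
  by_cases h₁ : P = Q
  · exact h₁ ▸ inter_subset_left
  by_cases h₂ : Q = R
  · exact h₂ ▸ inter_subset_right
  exact L.consec P hP Q hQ R hR hPQ h₁ hQR h₂

theorem join_sdiff_subset (hP : P ∈ L.sets) (hQ : Q ∈ L.sets) : L.join P Q \ P ⊆ Q :=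
  fun _ hx => (L.mem_or_mem_of_mem_join hP hQ (mem_sdiff.mp hx).1).resolve_left (mem_sdiff.mp hx).2

theorem join_sdiff_subset_sdiff_of_le {M : Finset α} (hM : M ∈ L.sets) (hQ : Q ∈ L.sets)
    (hR : R ∈ L.sets) (hMQ : L.le M Q) : L.join Q R \ Q ⊆ R \ M := by
  intro x hx
  obtain ⟨hxJ, hxQ⟩ := mem_sdiff.mp hx
  refine mem_sdiff.mpr ⟨L.join_sdiff_subset hQ hR hx, fun hxM => ?_⟩
  exact hxQ (L.inter_subset_of_le_of_le hM hQ (L.join_mem Q hQ R hR) hMQ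
    (L.left_le_join Q hQ R hR) (mem_inter.mpr ⟨hxM, hxJ⟩))

theorem avoids_join {m k : ℕ} {es : Fin m → α} (hP : P ∈ L.sets) (hQ : Q ∈ L.sets)
    (hPk : Avoids es k P) (hQk : Avoids es k Q) : Avoids es k (L.join P Q) :=
  fun j hj hjJ => (L.mem_or_mem_of_mem_join hP hQ hjJ).elim (hPk j hj) (hQk j hj)

theorem mem_of_mem_meet_of_card_inter_le_one {S : Finset α} {e x : α} (hQ : Q ∈ L.sets)
    (hP : P ∈ L.sets) (hSP : (S ∩ P).card ≤ 1) (he : e ∈ S ∩ P) (heM : e ∉ L.meet Q P)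
    (hxS : x ∈ S) (hxM : x ∈ L.meet Q P) : x ∈ Q := by
  refine (L.mem_or_mem_of_mem_meet hQ hP hxM).resolve_right fun hxP => heM ?_
  rwa [← card_le_one.mp hSP x (mem_inter.mpr ⟨hxS, hxP⟩) e he]

end SubmodConsecLattice

namespace IsGreedySupport

variable {PP : Finset (Finset α)} {le : Finset α → Finset α → Prop} {π : Finset α → ℝ}
  {ρ : α → ℝ} {m : ℕ} {es : Fin m → α} {Ps : Fin m → Finset α}

omit [Fintype α] [DecidableEq α]

theorem mem (h : IsGreedySupport PP le π ρ m es Ps) (i : Fin m) : Ps i ∈ PP := (h.2.1 i).1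

theorem es_mem (h : IsGreedySupport PP le π ρ m es Ps) (i : Fin m) : es i ∈ Ps i := h.1 i

theorem avoids (h : IsGreedySupport PP le π ρ m es Ps) (i : Fin m) : Avoids es i (Ps i) :=
  fun j hj => (h.2.1 i).2.1 j hj

theorem le_of_avoids (h : IsGreedySupport PP le π ρ m es Ps) {P : Finset α} (hP : P ∈ PP)
    {i : Fin m} (hPi : Avoids es i P) : le P (Ps i) :=
  (h.2.1 i).2.2 P hP fun j hj => hPi j hj

theorem le_of_le (h : IsGreedySupport PP le π ρ m es Ps) {i j : Fin m} (hij : i ≤ j) :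
    le (Ps j) (Ps i) :=
  h.le_of_avoids (h.mem j) ((h.avoids j).mono hij)

theorem le_of_es_mem (h : IsGreedySupport PP le π ρ m es Ps) {i j : Fin m} (hj : es j ∈ Ps i) :
    i ≤ j :=
  not_lt.mp fun hji => h.avoids i j hji hj

theorem pos (h : IsGreedySupport PP le π ρ m es Ps) (i : Fin m) : 0 < π (Ps i) := h.2.2.1 i

theorem nonpos_of_avoids (h : IsGreedySupport PP le π ρ m es Ps) {Q : Finset α} (hQ : Q ∈ PP)
    (hQm : Avoids es m Q) : π Q ≤ 0 :=
  h.2.2.2.1 Q hQ fun i => hQm i i.isLt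

theorem sum_eq (h : IsGreedySupport PP le π ρ m es Ps) (i : Fin m) :
    ∑ x ∈ Ps i, ρ x = π (Ps i) :=
  h.2.2.2.2.1.1 i

theorem exists_eq_of_pos (h : IsGreedySupport PP le π ρ m es Ps) {x : α} (hx : 0 < ρ x) :
    ∃ i, x = es i := by
  by_contra! hne
  exact hx.ne' (h.2.2.2.2.1.2 x hne)

end IsGreedySupport

section GreedyStep

variable {L : SubmodConsecLattice α} {π : Finset α → ℝ} {ρ : α → ℝ} {m : ℕ} {es : Fin m → α}
  {Ps : Fin m → Finset α} {Q : Finset α} {κ b : Fin m}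

theorem avoids_meet_of_es_mem_of_not_mem (hgs : IsGreedySupport L.sets L.le π ρ m es Ps)
    (hQ : Q ∈ L.sets) (hQκ : Avoids es κ Q) (hbκ : es b ∈ Ps κ) (hbQ : es b ∉ Q) :
    Avoids es (b + 1) (L.meet Q (Ps b)) := by
  have hM := L.meet_mem Q hQ (Ps b) (hgs.mem b)
  intro i hi hiM
  rcases Nat.lt_succ_iff_lt_or_eq.mp hi with hib | hib
  · exact hgs.avoids b i hib <| L.inter_subset_of_le_of_le hM (hgs.mem b) (hgs.mem i)
      (L.meet_le_right Q hQ (Ps b) (hgs.mem b)) (hgs.le_of_le (Fin.le_of_lt hib))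
      (mem_inter.mpr ⟨hiM, hgs.es_mem i⟩)
  · rw [Fin.ext hib] at hiM
    exact hbQ <| L.inter_subset_of_le_of_le hM hQ (hgs.mem κ)
      (L.meet_le_left Q hQ (Ps b) (hgs.mem b)) (hgs.le_of_avoids hQ hQκ)
      (mem_inter.mpr ⟨hiM, hbκ⟩)

theorem pos_meet_of_nonDominated (hgs : IsGreedySupport L.sets L.le π ρ m es Ps)
    (hsup : ∀ P ∈ L.sets, ∀ Q ∈ L.sets, π P + π Q ≤ π (L.join P Q) + π (L.meet P Q))
    (hρ : ∀ e, 0 ≤ ρ e) (hQ : NonDominated π ρ (posLevel L.sets π es κ) Q) (hbκ : es b ∈ Ps κ) :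
    0 < π (L.meet Q (Ps b)) := by
  obtain ⟨hQmem, hQpos, hQκ⟩ := mem_posLevel.mp hQ.1
  have hPb := hgs.mem b
  by_contra! hM
  -- otherwise `Q ∨ P_b` would strictly dominate `Q`
  have hdom : StrictlyDominates π ρ Q (L.join Q (Ps b)) := by
    refine strictlyDominates_of_supermodular (hsup Q hQmem (Ps b) hPb)
      (hM.trans_lt (hgs.pos b)) ?_
    calc π (L.meet Q (Ps b)) + ∑ e ∈ L.join Q (Ps b) \ Q, ρ e
        ≤ 0 + ∑ e ∈ Ps b, ρ e := add_le_add hM <|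
          sum_le_sum_of_subset_of_nonneg (L.join_sdiff_subset hQmem hPb) fun e _ _ => hρ e
      _ = π (Ps b) := by rw [zero_add, hgs.sum_eq]
  have hJ : L.join Q (Ps b) ∈ posLevel L.sets π es κ :=
    mem_posLevel.mpr ⟨L.join_mem Q hQmem (Ps b) hPb, hQpos.trans hdom.1,
      L.avoids_join hQmem hPb hQκ ((hgs.avoids b).mono (hgs.le_of_es_mem hbκ))⟩
  exact hQ.not_strictlyDominates hJ hdom

theorem nonDominated_meet (hgs : IsGreedySupport L.sets L.le π ρ m es Ps)
    (hsup : ∀ P ∈ L.sets, ∀ Q ∈ L.sets, π P + π Q ≤ π (L.join P Q) + π (L.meet P Q))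
    (hmono : ∀ P ∈ L.sets, ∀ Q ∈ L.sets, L.le P Q → π P ≤ π Q) (hρ : ∀ e, 0 ≤ ρ e)
    (hQ : NonDominated π ρ (posLevel L.sets π es κ) Q) (hbκ : es b ∈ Ps κ) (hbQ : es b ∉ Q) :
    NonDominated π ρ (posLevel L.sets π es (b + 1)) (L.meet Q (Ps b)) := by
  obtain ⟨hQmem, hQpos, hQκ⟩ := mem_posLevel.mp hQ.1
  have hPb := hgs.mem b
  set M := L.meet Q (Ps b)
  have hMmem : M ∈ L.sets := L.meet_mem Q hQmem (Ps b) hPb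
  refine ⟨mem_posLevel.mpr ⟨hMmem, pos_meet_of_nonDominated hgs hsup hρ hQ hbκ,
    avoids_meet_of_es_mem_of_not_mem hgs hQmem hQκ hbκ hbQ⟩, fun R hR hRM hMR => ?_⟩
  obtain ⟨hRmem, -, hRb⟩ := mem_posLevel.mp hR
  obtain ⟨hMR_lt, hMR_le⟩ : StrictlyDominates π ρ M R := hMR.resolve_left (Ne.symm hRM)
  -- `Q ∨ R` would strictly dominate `Q`
  have hVM : π (L.meet Q R) ≤ π M := by
    have hRPb : L.le R (Ps b) := hgs.le_of_avoids hRmem (hRb.mono b.val.le_succ)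
    refine hmono _ (L.meet_mem Q hQmem R hRmem) M hMmem <|
      L.le_meet Q hQmem (Ps b) hPb _ (L.meet_mem Q hQmem R hRmem)
        (L.meet_le_left Q hQmem R hRmem) ?_
    exact L.le_trans _ (L.meet_mem Q hQmem R hRmem) R hRmem (Ps b) hPb
      (L.meet_le_right Q hQmem R hRmem) hRPb
  have hdom : StrictlyDominates π ρ Q (L.join Q R) := by
    refine strictlyDominates_of_supermodular (hsup Q hQmem R hRmem) (hVM.trans_lt hMR_lt) ?_
    have hsum : ∑ e ∈ L.join Q R \ Q, ρ e ≤ ∑ e ∈ R \ M, ρ e :=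
      sum_le_sum_of_subset_of_nonneg
        (L.join_sdiff_subset_sdiff_of_le hMmem hQmem hRmem (L.meet_le_left Q hQmem (Ps b) hPb))
        fun e _ _ => hρ e
    linarith
  have hW : L.join Q R ∈ posLevel L.sets π es κ :=
    mem_posLevel.mpr ⟨L.join_mem Q hQmem R hRmem, hQpos.trans hdom.1,
      L.avoids_join hQmem hRmem hQκ (hRb.mono (Nat.le_succ_of_le (hgs.le_of_es_mem hbκ)))⟩
  exact hQ.not_strictlyDominates hW hdom

end GreedyStep

theorem inter_nonempty_of_nonDominated_posLevel {L : SubmodConsecLattice α}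
    {π : Finset α → ℝ} {ρ : α → ℝ} {m : ℕ} {es : Fin m → α} {Ps : Fin m → Finset α}
    {S : Finset α} (hgs : IsGreedySupport L.sets L.le π ρ m es Ps) (hS : GoodS ρ Ps S)
    (hsup : ∀ P ∈ L.sets, ∀ Q ∈ L.sets, π P + π Q ≤ π (L.join P Q) + π (L.meet P Q))
    (hmono : ∀ P ∈ L.sets, ∀ Q ∈ L.sets, L.le P Q → π P ≤ π Q) (hρ : ∀ e, 0 ≤ ρ e)
    (k : ℕ) (Q : Finset α) (hQ : NonDominated π ρ (posLevel L.sets π es k) Q) :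
    (S ∩ Q).Nonempty := by
  obtain ⟨hQmem, hQpos, hQk⟩ := mem_posLevel.mp hQ.1
  by_cases hkm : k < m
  swap
  · exact absurd (hgs.nonpos_of_avoids hQmem (hQk.mono (not_lt.mp hkm))) hQpos.not_ge
  let κ : Fin m := ⟨k, hkm⟩
  obtain ⟨s, hs⟩ := card_eq_one.mp (hS.2 κ)
  have hsSP : s ∈ S ∩ Ps κ := hs ▸ mem_singleton_self s
  obtain ⟨hsS, hsP⟩ := mem_inter.mp hsSP
  by_cases hsQ : s ∈ Q
  · exact ⟨s, mem_inter.mpr ⟨hsS, hsQ⟩⟩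
  -- `s = e_b` with `b ≥ k`; pass to `Q ∧ P_b`, which is non-dominated one level above `b`
  obtain ⟨b, rfl⟩ := hgs.exists_eq_of_pos (hS.1 s hsS)
  have hbk : k ≤ b := hgs.le_of_es_mem (i := κ) hsP
  have hMQ := nonDominated_meet hgs hsup hmono hρ hQ hsP hsQ
  obtain ⟨x, hx⟩ := inter_nonempty_of_nonDominated_posLevel hgs hS hsup hmono hρ (b + 1) _ hMQ
  obtain ⟨hxS, hxM⟩ := mem_inter.mp hx
  refine ⟨x, mem_inter.mpr ⟨hxS, L.mem_of_mem_meet_of_card_inter_le_one hQmem (hgs.mem b)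
    (hS.2 b).le (mem_inter.mpr ⟨hsS, hgs.es_mem b⟩) ?_ hxS hxM⟩⟩
  exact avoids_meet_of_es_mem_of_not_mem hgs hQmem hQk hsP hsQ b b.val.lt_succ_self
termination_by m - k

theorem lattice_goodS_nondominated_general (L : SubmodConsecLattice α) (π : Finset α → ℝ)
    (hsup : ∀ P ∈ L.sets, ∀ Q ∈ L.sets, π P + π Q ≤ π (L.join P Q) + π (L.meet P Q))
    (hmono : ∀ P ∈ L.sets, ∀ Q ∈ L.sets, L.le P Q → π P ≤ π Q)
    (ρ : α → ℝ) (hY : MemYplus L.sets π ρ)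
    (m : ℕ) (es : Fin m → α) (Ps : Fin m → Finset α)
    (hgs : IsGreedySupport L.sets L.le π ρ m es Ps)
    (S : Finset α) (hS : GoodS ρ Ps S) :
    ∀ Q, NonDominated π ρ (L.sets.filter fun Q' => 0 < π Q') Q → (S ∩ Q).Nonempty := by
  intro Q hQ
  rw [← posLevel_zero (es := es)] at hQ
  exact inter_nonempty_of_nonDominated_posLevel hgs hS hsup hmono hY.1 0 Q hQ

/-- If `S` fulfils (good-S) for a greedy support of `ρ ∈ Y⁺`, then `S ∩ Q ≠ ∅` for every
`Q ∈ PP` with `π Q > 0` that is non-dominated in `{Q' ∈ PP : π Q' > 0}`. -/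
theorem lattice_goodS_nondominated (L : SubmodConsecLattice α) (π : Finset α → ℝ)
    (hπ1 : ∀ P ∈ L.sets, π P ≤ 1)
    (hsup : ∀ P ∈ L.sets, ∀ Q ∈ L.sets, π P + π Q ≤ π (L.join P Q) + π (L.meet P Q))
    (hmono : ∀ P ∈ L.sets, ∀ Q ∈ L.sets, L.le P Q → π P ≤ π Q)
    (ρ : α → ℝ) (hY : MemYplus L.sets π ρ)
    (m : ℕ) (es : Fin m → α) (Ps : Fin m → Finset α)
    (hgs : IsGreedySupport L.sets L.le π ρ m es Ps)
    (S : Finset α) (hS : GoodS ρ Ps S) :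
    ∀ Q, NonDominated π ρ (L.sets.filter fun Q' => 0 < π Q') Q → (S ∩ Q).Nonempty :=
  lattice_goodS_nondominated_general L π hsup hmono ρ hY m es Ps hgs S hS
end

section
/- Let E be a finite ground set, 𝒫 ⊆ 2^E, and π : 𝒫 → (−∞,1] (so π_P ≤ 1 for all P ∈ 𝒫). If y is an extreme point of the polyhedron Y⁺ = {y ∈ ℝ^E_{≥0} : Σ_{e∈P} y_e ≥ π_P for all P ∈ 𝒫}, then y ∈ [0,1]^E, i.e., y_e ≤ 1 for all e ∈ E. -/
open Finset

variable {α : Type*} [Fintype α] [DecidableEq α]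

/-- If `π P ≤ 1` for all `P ∈ PP`, then every extreme point `y` of `Y⁺` satisfies `y e ≤ 1`
for all `e`. -/
theorem extreme_point_le_one (PP : Finset (Finset α)) (π : Finset α → ℝ)
    (hπ1 : ∀ P ∈ PP, π P ≤ 1) (y : α → ℝ) (hy : IsExtremePt PP π y) :
    ∀ e, y e ≤ 1 := by
  intro e
  by_contra h
  push_neg at h
  obtain ⟨⟨hnn, hcons⟩, hext⟩ := hy
  set y1 : α → ℝ := Function.update y e 1 with hy1
  set y2 : α → ℝ := Function.update y e (2 * y e - 1) with hy2
  have hm1 : MemYplus PP π y1 := by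
    constructor
    · intro a
      by_cases ha : a = e
      · subst ha; simp [hy1]
      · simp [hy1, Function.update_of_ne ha, hnn a]
    · intro P hP
      by_cases he : e ∈ P
      · have hsum : ∑ a ∈ P, y1 a = 1 + ∑ a ∈ P.erase e, y a := by
          rw [← Finset.add_sum_erase _ _ he]
          congr 1
          · simp [hy1]
          · apply Finset.sum_congr rfl
            intro a ha
            exact Function.update_of_ne (Finset.ne_of_mem_erase ha) _ _
        rw [hsum]
        have : (0:ℝ) ≤ ∑ a ∈ P.erase e, y a :=
          Finset.sum_nonneg fun a _ => hnn a
        linarith [hπ1 P hP]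
      · have hsum : ∑ a ∈ P, y1 a = ∑ a ∈ P, y a := by
          apply Finset.sum_congr rfl
          intro a ha
          exact Function.update_of_ne (by rintro rfl; exact he ha) _ _
        rw [hsum]; exact hcons P hP
  have hm2 : MemYplus PP π y2 := by
    constructor
    · intro a
      by_cases ha : a = e
      · subst ha; simp [hy2]; linarith
      · simp [hy2, Function.update_of_ne ha, hnn a]
    · intro P hP
      have hle : ∀ a ∈ P, y a ≤ y2 a := by
        intro a _
        by_cases ha : a = e
        · subst ha; simp [hy2]; linarith
        · simp [hy2, Function.update_of_ne ha]
      calc π P ≤ ∑ a ∈ P, y a := hcons P hP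
        _ ≤ ∑ a ∈ P, y2 a := Finset.sum_le_sum hle
  have hmid : ∀ a, y a = (1/2 : ℝ) * y1 a + (1 - 1/2) * y2 a := by
    intro a
    by_cases ha : a = e
    · subst ha; simp [hy1, hy2]; ring
    · simp [hy1, hy2, Function.update_of_ne ha]; ring
  have heq := hext y1 y2 hm1 hm2 (1/2) (by norm_num) (by norm_num) hmid
  have : y1 e = y2 e := by rw [heq]
  simp [hy1, hy2] at this
  linarith
end

section
/- Let E be a finite ground set, (𝒫,⪯) a submodular, consecutive lattice of subsets of E, and π : 𝒫 → (−∞,1] monotone and supermodular w.r.t. the lattice. Let ρ be an extreme point of Y⁺ with greedy support e_1,…,e_m, P_1,…,P_m, and let S ⊆ E fulfil condition (good-S) for this greedy support. Define ε := ε_{π,ρ}(S), π̄_P := π_P − ε for P ∈ 𝒫, and ρ̄_e := ρ_e − 1[e∈S]·ε for e ∈ E. Then π̄ is supermodular and monotone w.r.t. the lattice, and ρ̄ is an extreme point of the polyhedron Ȳ⁺ := {y ∈ ℝ^E_{≥0} : Σ_{e∈P} y_e ≥ π̄_P for all P ∈ 𝒫}. -/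
open Finset

variable {α : Type*} [Fintype α] [DecidableEq α]

/-- The step size `ε_{π,ρ}(S)`: the minimum of `min_{e ∈ S} ρ e`, `max_{P ∈ PP} π P`, and
`δ_{π,ρ}(S) = inf{(π P − ∑_{e∈P} ρ e)/(1 − |P ∩ S|) : P ∈ PP, |P ∩ S| > 1}` (the latter set of
values being empty if no such `P` exists). -/
noncomputable def epsVal (PP : Finset (Finset α)) (π : Finset α → ℝ) (ρ : α → ℝ)
    (S : Finset α) : ℝ :=
  sInf (ρ '' (S : Set α) ∪ {sSup (π '' (PP : Set (Finset α)))} ∪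
    {x : ℝ | ∃ P ∈ PP, 1 < (P ∩ S).card ∧
      x = (π P - ∑ e ∈ P, ρ e) / (1 - ((P ∩ S).card : ℝ))})

/-! Lowering `π` by `ε`, and `ρ` by `ε` on `S`, keeps every constraint `Ps i` of the greedy
support tight, since it meets `S` exactly once, and keeps `ρ̄` zero off `{e_1, …, e_m}`, since
`S ⊆ E_ρ`. Any solution of the shifted system lifts back (add `ε` on `S`) to a solution of the
original one, so `ρ̄` is again its unique solution, hence extreme. Feasibility of `ρ̄` is where
`ε` is needed: `ε ≤ ρ` on `S` keeps `ρ̄ ≥ 0`, and a constraint `P` with `k = |P ∩ S|` loses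
`(k - 1) ε` of slack, which is nothing for `k = 1`, is covered by `ε ≤ δ` for `k ≥ 2`, and for
`k = 0` is covered because every candidate in the minimum defining `ε` dominates the deficit
`π P - ∑_{e ∈ P} ρ e ≤ 0`. -/

section

omit [Fintype α] [DecidableEq α]

lemma eq_and_eq_of_convex_comb_eq {a b c t : ℝ} (ht0 : 0 < t) (ht1 : t < 1)
    (ha : c ≤ a) (hb : c ≤ b) (h : t * a + (1 - t) * b = c) : a = c ∧ b = c := by
  constructor <;> nlinarith

theorem isExtremePt_of_unique_tight {ι : Type*} {PP : Finset (Finset α)} {π : Finset α → ℝ}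
    {ρ : α → ℝ} (Ps : ι → Finset α) (Z : Set α) (hρ : MemYplus PP π ρ)
    (hPs : ∀ i, Ps i ∈ PP) (htight : ∀ i, ∑ x ∈ Ps i, ρ x = π (Ps i))
    (hZ : ∀ x ∈ Z, ρ x = 0)
    (huniq : ∀ y : α → ℝ, (∀ i, ∑ x ∈ Ps i, y x = π (Ps i)) → (∀ x ∈ Z, y x = 0) → y = ρ) :
    IsExtremePt PP π ρ := by
  refine ⟨hρ, fun y₁ y₂ hy₁ hy₂ t ht0 ht1 hcomb => ?_⟩
  have htight' : ∀ i, ∑ x ∈ Ps i, y₁ x = π (Ps i) ∧ ∑ x ∈ Ps i, y₂ x = π (Ps i) := by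
    intro i
    refine eq_and_eq_of_convex_comb_eq ht0 ht1 (hy₁.2 _ (hPs i)) (hy₂.2 _ (hPs i)) ?_
    rw [← htight i, mul_sum, mul_sum, ← sum_add_distrib]
    exact sum_congr rfl fun x _ => (hcomb x).symm
  have hZ' : ∀ x ∈ Z, y₁ x = 0 ∧ y₂ x = 0 := fun x hx =>
    eq_and_eq_of_convex_comb_eq ht0 ht1 (hy₁.1 x) (hy₂.1 x) ((hcomb x).symm.trans (hZ x hx))
  rw [huniq y₁ (fun i => (htight' i).1) (fun x hx => (hZ' x hx).1),
    huniq y₂ (fun i => (htight' i).2) (fun x hx => (hZ' x hx).2)]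

def deficit (π : Finset α → ℝ) (ρ : α → ℝ) (P : Finset α) : ℝ := π P - ∑ e ∈ P, ρ e

lemma deficit_le_zero {PP : Finset (Finset α)} {π : Finset α → ℝ} {ρ : α → ℝ}
    (hρ : MemYplus PP π ρ) {P : Finset α} (hP : P ∈ PP) :
    deficit π ρ P ≤ 0 :=
  sub_nonpos.2 (hρ.2 P hP)

end

section

omit [Fintype α]

lemma sum_ite_mem_const (P S : Finset α) (c : ℝ) :
    ∑ e ∈ P, (if e ∈ S then c else 0) = #(P ∩ S) * c := by
  rw [sum_ite_mem, sum_const, nsmul_eq_mul]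

theorem isExtremePt_residual {PP : Finset (Finset α)} {le : Finset α → Finset α → Prop}
    {π : Finset α → ℝ} {ρ : α → ℝ} {m : ℕ} {es : Fin m → α} {Ps : Fin m → Finset α}
    {S : Finset α} (c : ℝ) (hgs : IsGreedySupport PP le π ρ m es Ps) (hS : GoodS ρ Ps S)
    (hmem : MemYplus PP (fun P => π P - c) (fun e => ρ e - if e ∈ S then c else 0)) :
    IsExtremePt PP (fun P => π P - c) (fun e => ρ e - if e ∈ S then c else 0) := by
  obtain ⟨-, hPs, -, -, ⟨htight, hzero⟩, huniq⟩ := hgs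
  obtain ⟨hSpos, hScard⟩ := hS
  have hPsS : ∀ i, #(Ps i ∩ S) = 1 := fun i => by rw [inter_comm]; exact hScard i
  have hnotS : ∀ x, (∀ i, x ≠ es i) → x ∉ S := fun x hx hxS =>
    (hSpos x hxS).ne' (hzero x hx)
  refine isExtremePt_of_unique_tight Ps {x | ∀ i, x ≠ es i} hmem (fun i => (hPs i).1)
    (fun i => ?_) (fun x hx => ?_) (fun y hy hyZ => ?_)
  · simp only [sum_sub_distrib, sum_ite_mem_const, hPsS, htight]
    ring
  · simp [hzero x hx, hnotS x hx]
  · have hlift : (fun x => y x + if x ∈ S then c else 0) = ρ := by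
      refine huniq _ (fun i => ?_) (fun x hx => ?_)
      · rw [sum_add_distrib, hy i, sum_ite_mem_const, hPsS]
        ring
      · simp [hyZ x hx, hnotS x hx]
    funext x
    rw [← hlift]
    ring

section epsVal

variable (PP : Finset (Finset α)) (π : Finset α → ℝ) (ρ : α → ℝ) (S : Finset α)

def epsCandidates : Set ℝ :=
  ρ '' (S : Set α) ∪ {sSup (π '' (PP : Set (Finset α)))} ∪
    {x : ℝ | ∃ P ∈ PP, 1 < #(P ∩ S) ∧ x = deficit π ρ P / (1 - (#(P ∩ S) : ℝ))}

lemma epsVal_eq_sInf : epsVal PP π ρ S = sInf (epsCandidates PP π ρ S) := rfl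

lemma epsCandidates_finite : (epsCandidates PP π ρ S).Finite := by
  refine ((S.finite_toSet.image ρ).union (Set.finite_singleton _)).union
    ((PP.finite_toSet.image fun P => deficit π ρ P / (1 - (#(P ∩ S) : ℝ))).subset ?_)
  rintro x ⟨P, hP, -, rfl⟩
  exact ⟨P, hP, rfl⟩

lemma epsVal_le_of_mem {e : α} (he : e ∈ S) : epsVal PP π ρ S ≤ ρ e :=
  (epsVal_eq_sInf PP π ρ S).trans_le <| csInf_le (epsCandidates_finite PP π ρ S).bddBelow (Or.inl (Or.inl ⟨e, he, rfl⟩))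

lemma epsVal_le_delta {P : Finset α} (hP : P ∈ PP) (hcard : 1 < #(P ∩ S)) :
    epsVal PP π ρ S ≤ deficit π ρ P / (1 - (#(P ∩ S) : ℝ)) :=
  (epsVal_eq_sInf PP π ρ S).trans_le <| csInf_le (epsCandidates_finite PP π ρ S).bddBelow (Or.inr ⟨P, hP, hcard, rfl⟩)

variable {PP π ρ}

lemma deficit_le_epsVal (hρ : MemYplus PP π ρ) {P : Finset α} (hP : P ∈ PP) :
    deficit π ρ P ≤ epsVal PP π ρ S := by
  have hdef := deficit_le_zero hρ hP
  rw [epsVal_eq_sInf]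
  refine le_csInf ⟨_, Or.inl (Or.inr rfl)⟩ ?_
  rintro x ((⟨e, -, rfl⟩ | hx) | ⟨Q, hQ, hcard, rfl⟩)
  · exact hdef.trans (hρ.1 e)
  · rw [Set.mem_singleton_iff.1 hx]
    calc deficit π ρ P ≤ π P := sub_le_self _ (sum_nonneg fun e _ => hρ.1 e)
      _ ≤ _ := le_csSup (PP.finite_toSet.image π).bddAbove ⟨P, hP, rfl⟩
  · have hden : 1 - (#(Q ∩ S) : ℝ) < 0 := by
      rw [sub_neg]; exact_mod_cast hcard
    exact hdef.trans (div_nonneg_of_nonpos (deficit_le_zero hρ hQ) hden.le)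

theorem memYplus_residual (hρ : MemYplus PP π ρ) :
    MemYplus PP (fun P => π P - epsVal PP π ρ S)
      (fun e => ρ e - if e ∈ S then epsVal PP π ρ S else 0) := by
  refine ⟨fun e => ?_, fun P hP => ?_⟩
  · by_cases he : e ∈ S
    · simpa [he] using epsVal_le_of_mem PP π ρ S he
    · simpa [he] using hρ.1 e
  · have hdef := deficit_le_epsVal S hρ hP
    simp only [deficit] at hdef
    simp only [sum_sub_distrib, sum_ite_mem_const]
    rcases Nat.lt_or_ge 1 #(P ∩ S) with hcard | hcard
    · have hden : 1 - (#(P ∩ S) : ℝ) < 0 := by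
        rw [sub_neg]; exact_mod_cast hcard
      have hδ := epsVal_le_delta PP π ρ S hP hcard
      rw [le_div_iff_of_neg hden, deficit] at hδ
      linarith
    · interval_cases h : #(P ∩ S)
      · push_cast; linarith
      · push_cast; linarith [hρ.2 P hP]

end epsVal

end

theorem lattice_residual_extreme_point_general (L : SubmodConsecLattice α) (π : Finset α → ℝ)
    (hsup : ∀ P ∈ L.sets, ∀ Q ∈ L.sets, π P + π Q ≤ π (L.join P Q) + π (L.meet P Q))
    (hmono : ∀ P ∈ L.sets, ∀ Q ∈ L.sets, L.le P Q → π P ≤ π Q)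
    (ρ : α → ℝ) (hext : IsExtremePt L.sets π ρ)
    (m : ℕ) (es : Fin m → α) (Ps : Fin m → Finset α)
    (hgs : IsGreedySupport L.sets L.le π ρ m es Ps)
    (S : Finset α) (hS : GoodS ρ Ps S) :
    (∀ P ∈ L.sets, ∀ Q ∈ L.sets,
      (π P - epsVal L.sets π ρ S) + (π Q - epsVal L.sets π ρ S) ≤
        (π (L.join P Q) - epsVal L.sets π ρ S) + (π (L.meet P Q) - epsVal L.sets π ρ S)) ∧
    (∀ P ∈ L.sets, ∀ Q ∈ L.sets, L.le P Q →
      π P - epsVal L.sets π ρ S ≤ π Q - epsVal L.sets π ρ S) ∧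
    IsExtremePt L.sets (fun P => π P - epsVal L.sets π ρ S)
      (fun e => ρ e - (if e ∈ S then epsVal L.sets π ρ S else 0)) :=
  ⟨fun P hP Q hQ => by linarith [hsup P hP Q hQ],
    fun P hP Q hQ hPQ => by linarith [hmono P hP Q hQ hPQ],
    isExtremePt_residual _ hgs hS (memYplus_residual S hext.1)⟩

/-- Subtracting `ε := ε_{π,ρ}(S)` from `π`, and from `ρ` on `S`, preserves supermodularity,
monotonicity, and extremality: `π̄` is supermodular and monotone w.r.t. the lattice and `ρ̄` is an
extreme point of `Ȳ⁺ = {y ∈ ℝ^E_{≥0} : ∑_{e∈P} y e ≥ π̄ P for all P ∈ PP}`. -/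
theorem lattice_residual_extreme_point (L : SubmodConsecLattice α) (π : Finset α → ℝ)
    (hπ1 : ∀ P ∈ L.sets, π P ≤ 1)
    (hsup : ∀ P ∈ L.sets, ∀ Q ∈ L.sets, π P + π Q ≤ π (L.join P Q) + π (L.meet P Q))
    (hmono : ∀ P ∈ L.sets, ∀ Q ∈ L.sets, L.le P Q → π P ≤ π Q)
    (ρ : α → ℝ) (hext : IsExtremePt L.sets π ρ)
    (m : ℕ) (es : Fin m → α) (Ps : Fin m → Finset α)
    (hgs : IsGreedySupport L.sets L.le π ρ m es Ps)
    (S : Finset α) (hS : GoodS ρ Ps S) :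
    (∀ P ∈ L.sets, ∀ Q ∈ L.sets,
      (π P - epsVal L.sets π ρ S) + (π Q - epsVal L.sets π ρ S) ≤
        (π (L.join P Q) - epsVal L.sets π ρ S) + (π (L.meet P Q) - epsVal L.sets π ρ S)) ∧
    (∀ P ∈ L.sets, ∀ Q ∈ L.sets, L.le P Q →
      π P - epsVal L.sets π ρ S ≤ π Q - epsVal L.sets π ρ S) ∧
    IsExtremePt L.sets (fun P => π P - epsVal L.sets π ρ S)
      (fun e => ρ e - (if e ∈ S then epsVal L.sets π ρ S else 0)) :=
  lattice_residual_extreme_point_general L π hsup hmono ρ hext m es Ps hgs S hS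
end
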